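/- arXiv:1611.07011 — 10 statements merged into one kernel-verified Lean document; each statement's English description precedes it below -/
import Mathlib

section
/- If G is a graph such that every vertex degree of G is divisible by some integer d ≥ 2, and d does not divide |E(G)|, then G admits no interval edge coloring (i.e., there is no proper edge coloring of G with positive integers such that the colors on the edges incident to each vertex form an interval of consecutive integers). -/
/-- The set of colors appearing on edges incident to `v` under edge coloring `c`. -/
def colorsAt {V : Type*} (G : SimpleGraph V) (c : Sym2 V → ℕ) (v : V) : Set ℕ :=
  {i | ∃ e ∈ G.edgeSet, v ∈ e ∧ c e = i}

/-- A set of naturals is an interval of consecutive integers. -/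
def IsIntervalSet (S : Set ℕ) : Prop :=
  ∀ i j k, i ∈ S → j ∈ S → i ≤ k → k ≤ j → k ∈ S

/-- `c` is a proper edge coloring of `G`: distinct edges sharing a vertex get
different colors. -/
def IsProperEdgeColoring {V : Type*} (G : SimpleGraph V) (c : Sym2 V → ℕ) : Prop :=
  ∀ e₁ ∈ G.edgeSet, ∀ e₂ ∈ G.edgeSet, e₁ ≠ e₂ → (∃ v, v ∈ e₁ ∧ v ∈ e₂) → c e₁ ≠ c e₂

/-- An interval `t`-coloring: proper edge coloring with colors `1,…,t`, every color
used, and the colors at each vertex forming an interval of consecutive integers. -/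
def IsIntervalColoring {V : Type*} (G : SimpleGraph V) (t : ℕ) (c : Sym2 V → ℕ) : Prop :=
  IsProperEdgeColoring G c ∧
  (∀ e ∈ G.edgeSet, c e ∈ Set.Icc 1 t) ∧
  (∀ i ∈ Set.Icc 1 t, ∃ e ∈ G.edgeSet, c e = i) ∧
  (∀ v, IsIntervalSet (colorsAt G c v))

/-- A cyclic interval `t`-coloring: proper edge coloring with colors `1,…,t`, every
color used, and for each vertex the set of colors at it, or its complement in
`{1,…,t}`, is an interval of consecutive integers. -/
def IsCyclicIntervalColoring {V : Type*} (G : SimpleGraph V) (t : ℕ) (c : Sym2 V → ℕ) : Prop :=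
  IsProperEdgeColoring G c ∧
  (∀ e ∈ G.edgeSet, c e ∈ Set.Icc 1 t) ∧
  (∀ i ∈ Set.Icc 1 t, ∃ e ∈ G.edgeSet, c e = i) ∧
  (∀ v, IsIntervalSet (colorsAt G c v) ∨ IsIntervalSet (Set.Icc 1 t \ colorsAt G c v))

private 
lemma count_one (a d r : ℕ) (hd : 0 < d) (hr : r < d) :
    ((Finset.Ico a (a + d)).filter (fun x => x % d = r)).card = 1 := by
  rw [Finset.card_eq_one]
  obtain ⟨q, hq⟩ : d ∣ (a - a % d) := ⟨a / d, by
    have := Nat.div_add_mod a d; omega⟩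
  have hm : a % d < d := Nat.mod_lt _ hd
  have hm2 : a % d ≤ a := Nat.mod_le _ _
  have ha : a = d * q + a % d := by omega
  refine ⟨if a % d ≤ r then d * q + r else d * (q + 1) + r, ?_⟩
  ext x
  simp only [Finset.mem_filter, Finset.mem_Ico, Finset.mem_singleton]
  have e1 : d * (q + 1) = d * q + d := by ring
  have e2 : d * (q + 2) = d * q + d + d := by ring
  constructor
  · rintro ⟨⟨h1, h2⟩, h3⟩
    obtain ⟨p, hp⟩ : d ∣ (x - x % d) := ⟨x / d, by have := Nat.div_add_mod x d; omega⟩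
    rw [h3] at hp
    have hrx : r ≤ x := h3 ▸ Nat.mod_le x d
    have hx : x = d * p + r := by omega
    split_ifs with h
    · have hq1 : q ≤ p := by
        by_contra hc
        have h5 : d * (p + 1) ≤ d * q := Nat.mul_le_mul_left d (by omega)
        have h6 : d * (p + 1) = d * p + d := by ring
        omega
      have hq2 : p ≤ q := by
        by_contra hc
        have h5 : d * (q + 1) ≤ d * p := Nat.mul_le_mul_left d (by omega)
        omega
      have : p = q := by omega
      subst this; omega
    · have hq1 : q + 1 ≤ p := by
        by_contra hc
        have h5 : d * p ≤ d * q := Nat.mul_le_mul_left d (by omega)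
        omega
      have hq2 : p ≤ q + 1 := by
        by_contra hc
        have h5 : d * (q + 2) ≤ d * p := Nat.mul_le_mul_left d (by omega)
        omega
      have : p = q + 1 := by omega
      subst this; omega
  · rintro rfl
    split_ifs with h
    · exact ⟨⟨by omega, by omega⟩, by rw [Nat.mul_add_mod, Nat.mod_eq_of_lt hr]⟩
    · exact ⟨⟨by omega, by omega⟩, by rw [Nat.mul_add_mod, Nat.mod_eq_of_lt hr]⟩

lemma count_k (d r : ℕ) (hd : 0 < d) (hr : r < d) :
    ∀ (k a : ℕ), ((Finset.Ico a (a + k * d)).filter (fun x => x % d = r)).card = k := by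
  intro k
  induction k with
  | zero => simp
  | succ n ih =>
    intro a
    have hsplit : Finset.Ico a (a + (n + 1) * d) = Finset.Ico a (a + d) ∪ Finset.Ico (a + d) (a + (n + 1) * d) := by
      rw [Finset.Ico_union_Ico_eq_Ico (by omega) (by nlinarith)]
    have heq : a + (n + 1) * d = (a + d) + n * d := by ring
    rw [hsplit, Finset.filter_union, Finset.card_union_of_disjoint
      (Finset.disjoint_filter_filter (Finset.Ico_disjoint_Ico_consecutive _ _ _)),
      count_one a d r hd hr, heq, ih (a + d)]
    omega

private lemma interval_count (S : Finset ℕ) (h : IsIntervalSet ↑S) (d : ℕ) (hd : 0 < d)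
    (hdvd : d ∣ S.card) :
    ((S.filter (fun x => x % d = 0)).card) * d = S.card := by
  rcases S.eq_empty_or_nonempty with rfl | hS
  · simp
  obtain ⟨k, hk⟩ := hdvd
  set a := S.min' hS with hadef
  set b := S.max' hS with hbdef
  have hmin : a ∈ S := S.min'_mem hS
  have hmax : b ∈ S := S.max'_mem hS
  have hIcc : S = Finset.Icc a b := by
    ext x
    simp only [Finset.mem_Icc]
    exact ⟨fun hx => ⟨S.min'_le x hx, S.le_max' x hx⟩,
      fun ⟨h1, h2⟩ => h _ _ x hmin hmax h1 h2⟩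
  have hle : a ≤ b := S.min'_le _ hmax
  have hcard : S.card = b + 1 - a := by rw [hIcc, Nat.card_Icc]
  have hc : k * d = d * k := Nat.mul_comm k d
  have hIco : S = Finset.Ico a (a + k * d) := by
    rw [hIcc, ← Finset.Ico_add_one_right_eq_Icc]
    congr 1
    omega
  rw [hIco, count_k d 0 hd hd, Nat.card_Ico]
  omega

/-- If every vertex degree of `G` is divisible by some integer `d ≥ 2` and `d` does
not divide the number of edges of `G`, then `G` has no interval edge coloring. -/
theorem stmt0 {V : Type*} [Fintype V] [DecidableEq V] (G : SimpleGraph V)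
    [DecidableRel G.Adj] (d : ℕ) (hd : 2 ≤ d)
    (hdeg : ∀ v : V, d ∣ G.degree v)
    (hE : ¬ d ∣ G.edgeFinset.card) :
    ¬ ∃ (t : ℕ) (c : Sym2 V → ℕ), IsIntervalColoring G t c := by
  rintro ⟨t, c, hproper, -, -, hint⟩
  classical
  set Q : Sym2 V → Prop := fun e => c e % d = 0 with hQ
  -- per-vertex count
  have hv : ∀ v : V, ((G.incidenceFinset v).filter (fun e => c e % d = 0)).card * d
      = G.degree v := by
    intro v
    have hinj : Set.InjOn c (G.incidenceFinset v) := by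
      intro e₁ h₁ e₂ h₂ hc
      rw [Finset.mem_coe, SimpleGraph.mem_incidenceFinset] at h₁ h₂
      by_contra hne
      exact hproper e₁ h₁.1 e₂ h₂.1 hne ⟨v, h₁.2, h₂.2⟩ hc
    have hcard : ((G.incidenceFinset v).image c).card = G.degree v := by
      rw [Finset.card_image_of_injOn hinj, SimpleGraph.card_incidenceFinset_eq_degree]
    have hset : ↑((G.incidenceFinset v).image c) = colorsAt G c v := by
      ext i
      simp only [Finset.coe_image, Set.mem_image, Finset.mem_coe,
        SimpleGraph.mem_incidenceFinset, colorsAt, Set.mem_setOf_eq]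
      constructor
      · rintro ⟨e, ⟨he, hve⟩, rfl⟩; exact ⟨e, he, hve, rfl⟩
      · rintro ⟨e, he, hve, rfl⟩; exact ⟨e, ⟨he, hve⟩, rfl⟩
    have hic := interval_count ((G.incidenceFinset v).image c)
      (hset ▸ hint v) d (by omega) (hcard ▸ hdeg v)
    rw [hcard] at hic
    rw [← hic]
    congr 1
    rw [Finset.filter_image]
    exact (Finset.card_image_of_injOn (hinj.mono (Finset.filter_subset _ _))).symm
  -- double counting
  have hdouble : ∑ v : V, ((G.incidenceFinset v).filter (fun e => c e % d = 0)).card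
      = 2 * (G.edgeFinset.filter (fun e => c e % d = 0)).card := by
    have h1 : ∀ v : V, (G.incidenceFinset v).filter (fun e => c e % d = 0)
        = G.edgeFinset.filter (fun e => v ∈ e ∧ c e % d = 0) := by
      intro v
      rw [SimpleGraph.incidenceFinset_eq_filter, Finset.filter_filter]
    simp_rw [h1, Finset.card_filter]
    rw [Finset.sum_comm, Finset.mul_sum]
    refine Finset.sum_congr rfl ?_
    intro e he
    rw [SimpleGraph.mem_edgeFinset] at he
    have h2 : (Finset.univ.filter (fun v : V => v ∈ e)).card = 2 := by
      induction e with
      | _ x y =>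
        have hxy : x ≠ y := (G.mem_edgeSet.mp he).ne
        have : Finset.univ.filter (fun v : V => v ∈ s(x, y)) = {x, y} := by
          ext z
          simp [Sym2.mem_iff]
        rw [this, Finset.card_insert_of_notMem (by simpa using hxy), Finset.card_singleton]
    by_cases h4 : c e % d = 0
    · simp only [h4, and_true, if_true, mul_one]
      rw [← Finset.card_filter, h2]
    · simp [h4]
  -- combine
  have hsum : (∑ v : V, ((G.incidenceFinset v).filter (fun e => c e % d = 0)).card) * d
      = ∑ v : V, G.degree v := by
    rw [Finset.sum_mul]
    exact Finset.sum_congr rfl fun v _ => hv v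
  rw [hdouble, SimpleGraph.sum_degrees_eq_twice_card_edges] at hsum
  apply hE
  have h2 : (G.edgeFinset.filter (fun e => c e % d = 0)).card * d = G.edgeFinset.card := by
    apply Nat.eq_of_mul_eq_mul_left (show 0 < 2 by norm_num)
    linarith [hsum]
  exact ⟨(G.edgeFinset.filter (fun e => c e % d = 0)).card, by rw [← h2, Nat.mul_comm]⟩
end

section
/- If G is an Eulerian graph (connected with all vertex degrees even) and |E(G)| is odd, then G has no interval edge coloring. -/
/-!
At a vertex of even degree `2k`, the colors of an interval coloring form `k` pairs of consecutive
integers, so exactly `k` of the incident edges get an odd color. Counting the pairs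
(vertex, incident odd-colored edge) in two ways gives `2 · #(odd-colored edges) = ∑ deg v / 2 = #E`,
so `#E` is even.
-/

open Finset

theorem Nat.card_filter_odd_Ico_add_two_mul (a k : ℕ) : #{n ∈ Ico a (a + 2 * k) | Odd n} = k := by
  induction k with
  | zero => simp
  | succ k ih =>
    rw [show a + 2 * (k + 1) = a + 2 * k + 1 + 1 by ring, Nat.Ico_succ_right_eq_insert_Ico (by omega),
      Nat.Ico_succ_right_eq_insert_Ico (by omega), filter_insert, filter_insert]
    rcases Nat.even_or_odd (a + 2 * k) with h | h
    · rw [if_pos h.add_one, if_neg (Nat.not_odd_iff_even.2 h), card_insert_of_notMem (by simp), ih]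
    · rw [if_neg (Nat.not_odd_iff_even.2 h.add_one), if_pos h, card_insert_of_notMem (by simp), ih]

theorem IsIntervalSet.eq_Ico {s : Finset ℕ} (hs : IsIntervalSet ↑s) (hne : s.Nonempty) :
    s = Ico (s.min' hne) (s.min' hne + #s) := by
  have hIcc : s = Icc (s.min' hne) (s.max' hne) := by
    ext k
    refine ⟨fun hk ↦ mem_Icc.2 ⟨s.min'_le k hk, s.le_max' k hk⟩, fun hk ↦ ?_⟩
    exact hs _ _ k (s.min'_mem hne) (s.max'_mem hne) (mem_Icc.1 hk).1 (mem_Icc.1 hk).2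
  have hcard : #s = s.max' hne + 1 - s.min' hne := by
    conv_lhs => rw [hIcc]
    exact Nat.card_Icc _ _
  have hle := s.min'_le _ (s.max'_mem hne)
  nth_rw 1 [hIcc]
  rw [← Ico_add_one_right_eq_Icc, hcard]
  congr 1
  omega

theorem IsIntervalSet.two_mul_card_filter_odd {s : Finset ℕ} (hs : IsIntervalSet ↑s)
    (heven : Even #s) : 2 * #{n ∈ s | Odd n} = #s := by
  rcases s.eq_empty_or_nonempty with rfl | hne
  · simp
  obtain ⟨k, hk⟩ := heven
  have h := hs.eq_Ico hne
  rw [hk, ← two_mul] at h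
  rw [h, Nat.card_filter_odd_Ico_add_two_mul, Nat.card_Ico]
  omega

theorem Sym2.sum_card_filter_mem_eq_two_mul_card {V : Type*} [Fintype V] [DecidableEq V]
    {s : Finset (Sym2 V)} (hs : ∀ e ∈ s, ¬ e.IsDiag) :
    ∑ v, #{e ∈ s | v ∈ e} = 2 * #s := by
  have h := sum_card_bipartiteAbove_eq_sum_card_bipartiteBelow (s := univ) (t := s)
    (r := fun v e ↦ v ∈ e)
  simp only [bipartiteAbove, bipartiteBelow] at h
  rw [h, sum_congr rfl fun e he ↦ ?_, sum_const, smul_eq_mul, mul_comm]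
  rw [← Sym2.card_toFinset_of_not_isDiag e (hs e he)]
  congr 1
  ext v
  simp

open SimpleGraph

section

variable {V : Type*} {G : SimpleGraph V} {c : Sym2 V → ℕ}

theorem IsProperEdgeColoring.injOn_incidenceSet (hc : IsProperEdgeColoring G c) (v : V) :
    Set.InjOn c (G.incidenceSet v) := by
  intro e₁ he₁ e₂ he₂ hce
  by_contra hne
  exact hc e₁ he₁.1 e₂ he₂.1 hne ⟨v, he₁.2, he₂.2⟩ hce

theorem colorsAt_eq_image_incidenceSet (v : V) : colorsAt G c v = c '' G.incidenceSet v := by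
  ext i
  simp [colorsAt, incidenceSet, and_assoc]

variable [Fintype V] [DecidableEq V] [DecidableRel G.Adj]

theorem IsProperEdgeColoring.two_mul_card_incidenceFinset_filter_odd
    (hc : IsProperEdgeColoring G c) {v : V} (hv : IsIntervalSet (colorsAt G c v))
    (heven : Even (G.degree v)) :
    2 * #{e ∈ G.incidenceFinset v | Odd (c e)} = G.degree v := by
  have hinj : Set.InjOn c (G.incidenceFinset v : Set (Sym2 V)) := by
    simpa using hc.injOn_incidenceSet v
  have hcard : #((G.incidenceFinset v).image c) = G.degree v := by
    rw [card_image_of_injOn hinj, card_incidenceFinset_eq_degree]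
  have hint : IsIntervalSet ↑((G.incidenceFinset v).image c) := by
    simpa [colorsAt_eq_image_incidenceSet] using hv
  rw [← card_image_of_injOn (hinj.mono (filter_subset _ _)), ← filter_image, ← hcard]
  exact hint.two_mul_card_filter_odd (hcard ▸ heven)

theorem IsProperEdgeColoring.even_card_edgeFinset (hc : IsProperEdgeColoring G c)
    (hint : ∀ v, IsIntervalSet (colorsAt G c v)) (heven : ∀ v, Even (G.degree v)) :
    Even #G.edgeFinset := by
  set oddEdges := {e ∈ G.edgeFinset | Odd (c e)}
  have hincident (v : V) : {e ∈ oddEdges | v ∈ e} = {e ∈ G.incidenceFinset v | Odd (c e)} := by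
    rw [incidenceFinset_eq_filter, filter_filter, filter_filter]
    simp only [and_comm]
  have hcount : 2 * #oddEdges = ∑ v, #{e ∈ G.incidenceFinset v | Odd (c e)} := by
    rw [← Sym2.sum_card_filter_mem_eq_two_mul_card
      fun e he ↦ G.not_isDiag_of_mem_edgeFinset (filter_subset _ _ he)]
    exact sum_congr rfl fun v _ ↦ congrArg card (hincident v)
  have hdouble : 2 * (2 * #oddEdges) = 2 * #G.edgeFinset := by
    rw [hcount, mul_sum, ← sum_degrees_eq_twice_card_edges]
    exact sum_congr rfl fun v _ ↦ hc.two_mul_card_incidenceFinset_filter_odd (hint v) (heven v)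
  exact ⟨#oddEdges, by omega⟩

end

theorem stmt1_general {V : Type*} [Fintype V] [DecidableEq V] (G : SimpleGraph V)
    [DecidableRel G.Adj]
    (heven : ∀ v : V, Even (G.degree v))
    (hodd : Odd G.edgeFinset.card) :
    ¬ ∃ (t : ℕ) (c : Sym2 V → ℕ), IsIntervalColoring G t c := by
  rintro ⟨t, c, hproper, -, -, hint⟩
  exact Nat.not_even_iff_odd.2 hodd (hproper.even_card_edgeFinset hint heven)

/-- If `G` is Eulerian (connected with all degrees even) and has an odd number of
edges, then `G` has no interval edge coloring. -/
theorem stmt1 {V : Type*} [Fintype V] [DecidableEq V] (G : SimpleGraph V)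
    [DecidableRel G.Adj]
    (hconn : G.Connected) (heven : ∀ v : V, Even (G.degree v))
    (hodd : Odd G.edgeFinset.card) :
    ¬ ∃ (t : ℕ) (c : Sym2 V → ℕ), IsIntervalColoring G t c :=
  stmt1_general G heven hodd
end

section
/- If a graph G has an interval t-coloring (for any t), then G admits a proper edge coloring with exactly Δ(G) colors, i.e., χ'(G) = Δ(G). -/
lemma SimpleGraph.maxDegree_pos_of_mem_edgeSet {V : Type*} [Fintype V] (G : SimpleGraph V)
    [DecidableRel G.Adj] {e : Sym2 V} (he : e ∈ G.edgeSet) : 0 < G.maxDegree := by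
  induction e using Sym2.ind with
  | h a b => exact ((G.degree_pos_iff_exists_adj a).2 ⟨b, he⟩).trans_le (G.degree_le_maxDegree a)

section

variable {V : Type*} (G : SimpleGraph V)

lemma colorsAt_eq_image (c : Sym2 V → ℕ) (v : V) : colorsAt G c v = c '' G.incidenceSet v := by
  ext i
  simp only [colorsAt, SimpleGraph.incidenceSet, Set.mem_image, Set.mem_ofPred_eq, and_assoc]

lemma abs_sub_lt_degree_of_mem_colorsAt {c : Sym2 V → ℕ} {v : V} [Fintype (G.neighborSet v)]
    (hv : IsIntervalSet (colorsAt G c v)) {a b : ℕ} (ha : a ∈ colorsAt G c v)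
    (hb : b ∈ colorsAt G c v) : |(b : ℤ) - a| < G.degree v := by
  classical
  wlog hab : a ≤ b generalizing a b
  · rw [abs_sub_comm]
    exact this hb ha (le_of_not_ge hab)
  have hsub : Finset.Icc a b ⊆ (G.incidenceFinset v).image c := by
    intro k hk
    rw [Finset.mem_Icc] at hk
    have hk' := hv a b k ha hb hk.1 hk.2
    rwa [colorsAt_eq_image, ← G.coe_incidenceFinset, ← Finset.coe_image, Finset.mem_coe] at hk'
  have hcard : b + 1 - a ≤ G.degree v := calc
    b + 1 - a = (Finset.Icc a b).card := (Nat.card_Icc a b).symm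
    _ ≤ ((G.incidenceFinset v).image c).card := Finset.card_le_card hsub
    _ ≤ (G.incidenceFinset v).card := Finset.card_image_le
    _ = G.degree v := G.card_incidenceFinset_eq_degree v
  rw [abs_of_nonneg (by omega)]
  omega

variable {G} in
theorem IsProperEdgeColoring.mod [Fintype V] [DecidableRel G.Adj] {c : Sym2 V → ℕ}
    (hc : IsProperEdgeColoring G c) (hint : ∀ v, IsIntervalSet (colorsAt G c v)) {n : ℕ}
    (hn : G.maxDegree ≤ n) : IsProperEdgeColoring G (c · % n) := by
  rintro e₁ he₁ e₂ he₂ hne ⟨v, hv₁, hv₂⟩ hmod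
  have hdist : |((c e₂ : ℕ) : ℤ) - c e₁| < n :=
    (abs_sub_lt_degree_of_mem_colorsAt G (hint v) ⟨e₁, he₁, hv₁, rfl⟩
      ⟨e₂, he₂, hv₂, rfl⟩).trans_le (by exact_mod_cast (G.degree_le_maxDegree v).trans hn)
  exact hc e₁ he₁ e₂ he₂ hne ⟨v, hv₁, hv₂⟩ (Nat.ModEq.eq_of_abs_lt hmod hdist)

end

theorem stmt2_general {V : Type*} [Fintype V] (G : SimpleGraph V)
    [DecidableRel G.Adj]
    (h : ∃ (t : ℕ) (c : Sym2 V → ℕ), IsIntervalColoring G t c) :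
    ∃ C : G.edgeSet → Fin G.maxDegree,
      ∀ e₁ e₂ : G.edgeSet, e₁ ≠ e₂ →
        (∃ v : V, v ∈ (e₁ : Sym2 V) ∧ v ∈ (e₂ : Sym2 V)) → C e₁ ≠ C e₂ := by
  obtain ⟨_, c, hc, -, -, hint⟩ := h
  refine ⟨fun e => ⟨c e % G.maxDegree, Nat.mod_lt _ (G.maxDegree_pos_of_mem_edgeSet e.2)⟩, ?_⟩
  intro e₁ e₂ hne hv hC
  exact hc.mod hint le_rfl e₁ e₁.2 e₂ e₂.2 (Subtype.coe_injective.ne hne) hv (congrArg Fin.val hC)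

/-- If `G` has an interval `t`-coloring for some `t`, then `G` admits a proper edge
coloring with exactly `Δ(G)` colors, i.e. `χ'(G) = Δ(G)`. -/
theorem stmt2 {V : Type*} [Fintype V] [DecidableEq V] (G : SimpleGraph V)
    [DecidableRel G.Adj]
    (h : ∃ (t : ℕ) (c : Sym2 V → ℕ), IsIntervalColoring G t c) :
    ∃ C : G.edgeSet → Fin G.maxDegree,
      ∀ e₁ e₂ : G.edgeSet, e₁ ≠ e₂ →
        (∃ v : V, v ∈ (e₁ : Sym2 V) ∧ v ∈ (e₂ : Sym2 V)) → C e₁ ≠ C e₂ :=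
  stmt2_general G h
end

section
/- If G is an interval colorable graph, then the minimum number of colors w(G) in an interval coloring of G satisfies w(G) ≥ ⌈|V(G)| / (2·α'(G))⌉ · δ(G), where α'(G) is the maximum size of a matching in G and δ(G) is the minimum degree. -/
/-- The matching number `α'(G)`: the largest size of a set of pairwise disjoint
edges of `G`. -/
noncomputable def matchingNumber {V : Type*} (G : SimpleGraph V) : ℕ :=
  sSup {n | ∃ s : Finset (Sym2 V), ↑s ⊆ G.edgeSet ∧
    (∀ e ∈ s, ∀ f ∈ s, e ≠ f → ∀ v : V, ¬ (v ∈ e ∧ v ∈ f)) ∧ s.card = n}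

/-- Any matching's cardinality is at most the matching number. -/
lemma matching_card_le_matchingNumber {V : Type*} [Fintype V] [DecidableEq V]
    (G : SimpleGraph V) (s : Finset (Sym2 V)) (hs : ↑s ⊆ G.edgeSet)
    (hd : ∀ e ∈ s, ∀ f ∈ s, e ≠ f → ∀ v : V, ¬ (v ∈ e ∧ v ∈ f)) :
    s.card ≤ matchingNumber G := by
  apply le_csSup
  · refine ⟨Fintype.card (Sym2 V), ?_⟩
    rintro n ⟨u, -, -, rfl⟩
    exact (Finset.card_le_univ u).trans_eq Finset.card_univ
  · exact ⟨s, hs, hd, rfl⟩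

/-- For each color, the set of vertices incident to an edge of that color has
size at most twice the matching number. -/
lemma card_color_class_le {V : Type*} [Fintype V] [DecidableEq V]
    (G : SimpleGraph V) [DecidableRel G.Adj] (c : Sym2 V → ℕ)
    (hprop : IsProperEdgeColoring G c) (i : ℕ)
    [DecidablePred fun v : V => ∃ e ∈ G.edgeSet, v ∈ e ∧ c e = i] :
    (Finset.univ.filter fun v : V => ∃ e ∈ G.edgeSet, v ∈ e ∧ c e = i).card ≤
      2 * matchingNumber G := by
  classical
  set S : Finset (Sym2 V) := G.edgeFinset.filter (fun e => c e = i) with hS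
  have hsub : (Finset.univ.filter fun v : V => ∃ e ∈ G.edgeSet, v ∈ e ∧ c e = i) ⊆
      S.biUnion (fun e => Finset.univ.filter (· ∈ e)) := by
    intro v hv
    simp only [Finset.mem_filter, Finset.mem_univ, true_and] at hv
    obtain ⟨e, he, hve, hce⟩ := hv
    refine Finset.mem_biUnion.2 ⟨e, ?_, ?_⟩
    · simp [hS, SimpleGraph.mem_edgeFinset, he, hce]
    · simp [hve]
  have hcard2 : ∀ e ∈ S, (Finset.univ.filter (· ∈ e)).card ≤ 2 := by
    intro e _
    induction e with
    | h a b =>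
      have : (Finset.univ.filter (· ∈ s(a, b))) ⊆ {a, b} := by
        intro v hv
        simp only [Finset.mem_filter, Sym2.mem_iff] at hv
        simp [hv.2]
      exact (Finset.card_le_card this).trans (Finset.card_insert_le _ _ |>.trans (by simp))
  have hmatch : S.card ≤ matchingNumber G := by
    apply matching_card_le_matchingNumber G S
    · intro e he
      simp only [hS, Finset.coe_filter, Set.mem_setOf_eq, Finset.mem_coe] at he
      exact (SimpleGraph.mem_edgeFinset.1 he.1)
    · intro e he f hf hef v hv
      simp only [hS, Finset.mem_filter, SimpleGraph.mem_edgeFinset] at he hf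
      exact hprop e he.1 f hf.1 hef ⟨v, hv⟩ (he.2.trans hf.2.symm)
  calc (Finset.univ.filter fun v : V => ∃ e ∈ G.edgeSet, v ∈ e ∧ c e = i).card
      ≤ (S.biUnion (fun e => Finset.univ.filter (· ∈ e))).card := Finset.card_le_card hsub
    _ ≤ ∑ e ∈ S, (Finset.univ.filter (· ∈ e)).card := Finset.card_biUnion_le
    _ ≤ ∑ _e ∈ S, 2 := Finset.sum_le_sum hcard2
    _ = S.card * 2 := by simp [Finset.sum_const, Nat.smul_one_eq_cast]
    _ ≤ 2 * matchingNumber G := by omega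


/-- Every vertex has an incident edge colored with a positive multiple `m*δ`
of the minimum degree, with `m ≤ t/δ`. -/
lemma exists_multiple {V : Type*} [Fintype V] [DecidableEq V]
    (G : SimpleGraph V) [DecidableRel G.Adj] (t : ℕ) (c : Sym2 V → ℕ)
    (hprop : IsProperEdgeColoring G c)
    (hbound : ∀ e ∈ G.edgeSet, c e ∈ Set.Icc 1 t)
    (hint : ∀ v, IsIntervalSet (colorsAt G c v))
    (hδ : 0 < G.minDegree) (v : V) :
    ∃ m, 1 ≤ m ∧ m ≤ t / G.minDegree ∧ (m * G.minDegree) ∈ colorsAt G c v := by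
  classical
  set δ := G.minDegree with hδdef
  set I : Finset ℕ := (G.incidenceFinset v).image c with hI
  have hinj : Set.InjOn c (G.incidenceFinset v) := by
    intro e₁ he₁ e₂ he₂ hce
    by_contra hne
    rw [Finset.mem_coe, SimpleGraph.mem_incidenceFinset] at he₁ he₂
    exact hprop e₁ he₁.1 e₂ he₂.1 hne ⟨v, he₁.2, he₂.2⟩ hce
  have hIcard : I.card = G.degree v := by
    rw [hI, Finset.card_image_of_injOn hinj, SimpleGraph.card_incidenceFinset_eq_degree]
  have hdeg : δ ≤ G.degree v := G.minDegree_le_degree v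
  have hne : I.Nonempty := by
    rw [← Finset.card_pos, hIcard]; omega
  set a := I.min' hne with ha
  set b := I.max' hne with hb
  have hIcolors : ∀ x ∈ I, x ∈ colorsAt G c v := by
    intro x hx
    obtain ⟨e, he, rfl⟩ := Finset.mem_image.1 hx
    rw [SimpleGraph.mem_incidenceFinset] at he
    exact ⟨e, he.1, he.2, rfl⟩
  have hicc : ∀ k, a ≤ k → k ≤ b → k ∈ colorsAt G c v := fun k h1 h2 =>
    hint v a b k (hIcolors a (I.min'_mem hne)) (hIcolors b (I.max'_mem hne)) h1 h2
  have hab : δ + a ≤ b + 1 := by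
    have hsub : I ⊆ Finset.Icc a b := fun x hx =>
      Finset.mem_Icc.2 ⟨I.min'_le x hx, I.le_max' x hx⟩
    have := Finset.card_le_card hsub
    rw [hIcard, Nat.card_Icc] at this
    omega
  have ha1 : 1 ≤ a := by
    obtain ⟨e, he, -, hce⟩ := hIcolors a (I.min'_mem hne)
    have := hbound e he; rw [hce] at this; exact this.1
  have hbt : b ≤ t := by
    obtain ⟨e, he, -, hce⟩ := hIcolors b (I.max'_mem hne)
    have := hbound e he; rw [hce] at this; exact this.2
  refine ⟨b / δ, ?_, Nat.div_le_div_right hbt, ?_⟩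
  · exact (Nat.one_le_div_iff hδ).2 (by omega)
  · obtain ⟨md, hmd⟩ : ∃ md, md = b / δ * δ := ⟨_, rfl⟩
    have h2 : md + b % δ = b := by rw [hmd, Nat.mul_comm]; exact Nat.div_add_mod b δ
    have h3 : b % δ < δ := Nat.mod_lt _ hδ
    rw [← hmd]
    exact hicc md (by omega) (by omega)

/-- Any interval `t`-coloring of `G` satisfies
`t ≥ ⌈|V(G)| / (2·α'(G))⌉ · δ(G)`; in particular `w(G)` is bounded below by this. -/
theorem stmt3 {V : Type*} [Fintype V] [DecidableEq V] (G : SimpleGraph V)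
    [DecidableRel G.Adj] (t : ℕ) (c : Sym2 V → ℕ)
    (h : IsIntervalColoring G t c) :
    (Fintype.card V ⌈/⌉ (2 * matchingNumber G)) * G.minDegree ≤ t := by
  classical
  obtain ⟨hprop, hbound, -, hint⟩ := h
  set δ := G.minDegree with hδdef
  rcases Nat.eq_zero_or_pos δ with hδ | hδ
  · simp [hδ]
  rcases isEmpty_or_nonempty V with hV | hV
  · simp [Fintype.card_eq_zero]
  have hα : 1 ≤ matchingNumber G := by
    obtain ⟨v⟩ := hV
    have hdeg : 0 < G.degree v := lt_of_lt_of_le hδ (G.minDegree_le_degree v)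
    obtain ⟨w, hw⟩ := (G.degree_pos_iff_exists_adj v).1 hdeg
    have hle : ({s(v, w)} : Finset (Sym2 V)).card ≤ matchingNumber G := by
      apply matching_card_le_matchingNumber
      · simp [SimpleGraph.mem_edgeSet, hw]
      · intro e he f hf hef
        simp only [Finset.mem_singleton] at he hf
        exact fun _ _ => hef (he.trans hf.symm)
    simpa using hle
  have h2α : 0 < 2 * matchingNumber G := by omega
  choose g hg1 hg2 hg3 using fun v => exists_multiple G t c hprop hbound hint hδ v
  have hmem : ∀ v ∈ (Finset.univ : Finset V), g v ∈ Finset.Icc 1 (t / δ) :=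
    fun v _ => Finset.mem_Icc.2 ⟨hg1 v, hg2 v⟩
  have hcount : Fintype.card V ≤ (t / δ) * (2 * matchingNumber G) := by
    rw [← Finset.card_univ, Finset.card_eq_sum_card_fiberwise hmem]
    calc ∑ m ∈ Finset.Icc 1 (t / δ), (Finset.univ.filter (fun v => g v = m)).card
        ≤ ∑ _m ∈ Finset.Icc 1 (t / δ), 2 * matchingNumber G := by
          apply Finset.sum_le_sum
          intro m _
          refine le_trans (Finset.card_le_card ?_) (card_color_class_le G c hprop (m * δ))
          intro v hv
          simp only [Finset.mem_filter, Finset.mem_univ, true_and] at hv ⊢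
          have h3 := hg3 v
          rw [hv] at h3
          exact h3
      _ = (t / δ) * (2 * matchingNumber G) := by
          rw [Finset.sum_const, Nat.card_Icc, smul_eq_mul, Nat.add_sub_cancel]
  have hk : Fintype.card V ⌈/⌉ (2 * matchingNumber G) ≤ t / δ := by
    rw [ceilDiv_le_iff_le_mul h2α]
    exact hcount.trans_eq (Nat.mul_comm _ _)
  calc (Fintype.card V ⌈/⌉ (2 * matchingNumber G)) * δ
      ≤ (t / δ) * δ := Nat.mul_le_mul_right δ hk
    _ ≤ t := Nat.div_mul_le_self t δ
end

section
/- If a graph G has no perfect matching and G is interval colorable, then the minimum number of colors in an interval coloring of G satisfies w(G) ≥ max{Δ(G), 2·δ(G)}. -/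
/-! If `t < 2δ`, every vertex sees an interval of at least `δ` colors inside `[1, t]`, and any
such interval contains the color `δ`. The edges of color `δ` then form a perfect matching.
The bound `Δ ≤ t` holds because the edges at a vertex carry distinct colors in `[1, t]`. -/

theorem IsIntervalSet.mem_of_le_card {S : Finset ℕ} (hS : IsIntervalSet S) {t d : ℕ}
    (hsub : S ⊆ Finset.Icc 1 t) (hd : d ≤ S.card) (ht : t < 2 * d) : d ∈ S := by
  have hne : S.Nonempty := Finset.card_pos.1 (by omega)
  have hmin := hsub (S.min'_mem hne)
  have hmax := hsub (S.max'_mem hne)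
  rw [Finset.mem_Icc] at hmin hmax
  have hcard : S.card ≤ S.max' hne + 1 - S.min' hne := by
    calc S.card ≤ (Finset.Icc (S.min' hne) (S.max' hne)).card :=
          Finset.card_le_card fun i hi =>
            Finset.mem_Icc.2 ⟨S.min'_le i hi, S.le_max' i hi⟩
      _ = S.max' hne + 1 - S.min' hne := Nat.card_Icc _ _
  -- `min S ≤ t + 1 - d ≤ d ≤ min S + d - 1 ≤ max S`
  exact hS _ _ d (S.min'_mem hne) (S.max'_mem hne) (by omega) (by omega)

section

open SimpleGraph

variable {V : Type*} {G : SimpleGraph V} {c : Sym2 V → ℕ}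

theorem mem_colorsAt_iff {v : V} {i : ℕ} :
    i ∈ colorsAt G c v ↔ ∃ w, G.Adj v w ∧ c s(v, w) = i := by
  constructor
  · rintro ⟨e, he, hve, rfl⟩
    induction e using Sym2.ind with
    | _ x y =>
      rcases Sym2.mem_iff.1 hve with rfl | rfl
      · exact ⟨y, he, rfl⟩
      · exact ⟨x, he.symm, by rw [Sym2.eq_swap]⟩
  · rintro ⟨w, hw, rfl⟩
    exact ⟨s(v, w), hw, Sym2.mem_mk_left v w, rfl⟩

theorem IsProperEdgeColoring.injOn_neighborSet (hp : IsProperEdgeColoring G c) (v : V) :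
    Set.InjOn (fun w => c s(v, w)) (G.neighborSet v) := by
  intro w₁ hw₁ w₂ hw₂ hc
  by_contra hne
  refine hp _ hw₁ _ hw₂ ?_ ⟨v, Sym2.mem_mk_left v w₁, Sym2.mem_mk_left v w₂⟩ hc
  rw [Ne, Sym2.eq_iff]
  rintro (⟨-, h⟩ | ⟨rfl, -⟩)
  exacts [hne h, G.loopless.irrefl v hw₂]

def colorsAtFinset (G : SimpleGraph V) (c : Sym2 V → ℕ) (v : V) [Fintype (G.neighborSet v)] :
    Finset ℕ :=
  (G.neighborFinset v).image fun w => c s(v, w)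

variable (v : V) [Fintype (G.neighborSet v)]

theorem coe_colorsAtFinset : (colorsAtFinset G c v : Set ℕ) = colorsAt G c v := by
  ext i
  simp [colorsAtFinset, mem_colorsAt_iff]

theorem IsProperEdgeColoring.card_colorsAtFinset (hp : IsProperEdgeColoring G c) :
    (colorsAtFinset G c v).card = G.degree v := by
  rw [colorsAtFinset, Finset.card_image_of_injOn, card_neighborFinset_eq_degree]
  simpa using hp.injOn_neighborSet v

theorem colorsAtFinset_subset_Icc {t : ℕ} (hrange : ∀ e ∈ G.edgeSet, c e ∈ Set.Icc 1 t) :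
    colorsAtFinset G c v ⊆ Finset.Icc 1 t := by
  intro i hi
  rw [← Finset.mem_coe, coe_colorsAtFinset] at hi
  obtain ⟨w, hw, rfl⟩ := mem_colorsAt_iff.1 hi
  simpa using hrange _ hw

theorem IsProperEdgeColoring.degree_le (hp : IsProperEdgeColoring G c) {t : ℕ}
    (hrange : ∀ e ∈ G.edgeSet, c e ∈ Set.Icc 1 t) : G.degree v ≤ t := by
  calc G.degree v = (colorsAtFinset G c v).card := (hp.card_colorsAtFinset v).symm
    _ ≤ (Finset.Icc 1 t).card := Finset.card_le_card (colorsAtFinset_subset_Icc v hrange)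
    _ = t := Nat.card_Icc 1 t

theorem IsProperEdgeColoring.mem_colorsAt_of_le_degree (hp : IsProperEdgeColoring G c) {t d : ℕ}
    (hrange : ∀ e ∈ G.edgeSet, c e ∈ Set.Icc 1 t) (hint : IsIntervalSet (colorsAt G c v))
    (hd : d ≤ G.degree v) (ht : t < 2 * d) : d ∈ colorsAt G c v := by
  rw [← coe_colorsAtFinset v] at hint ⊢
  exact hint.mem_of_le_card (colorsAtFinset_subset_Icc v hrange)
    (hp.card_colorsAtFinset v ▸ hd) ht

def colorClass (G : SimpleGraph V) (c : Sym2 V → ℕ) (k : ℕ) : G.Subgraph where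
  verts := {v | k ∈ colorsAt G c v}
  Adj x y := G.Adj x y ∧ c s(x, y) = k
  adj_sub h := h.1
  edge_vert h := mem_colorsAt_iff.2 ⟨_, h⟩
  symm := ⟨fun _ _ h => ⟨h.1.symm, Sym2.eq_swap ▸ h.2⟩⟩

theorem IsProperEdgeColoring.isMatching_colorClass (hp : IsProperEdgeColoring G c) (k : ℕ) :
    (colorClass G c k).IsMatching := by
  intro v hv
  obtain ⟨w, hw, hcw⟩ := mem_colorsAt_iff.1 (show k ∈ colorsAt G c v from hv)
  exact ⟨w, ⟨hw, hcw⟩, fun w' hw' =>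
    hp.injOn_neighborSet v hw'.1 hw (hw'.2.trans hcw.symm)⟩

theorem IsProperEdgeColoring.isPerfectMatching_colorClass (hp : IsProperEdgeColoring G c)
    {k : ℕ} (hk : ∀ v, k ∈ colorsAt G c v) : (colorClass G c k).IsPerfectMatching :=
  ⟨hp.isMatching_colorClass k, hk⟩

end

theorem stmt4_general {V : Type*} [Fintype V] (G : SimpleGraph V)
    [DecidableRel G.Adj]
    (hpm : ¬ ∃ M : G.Subgraph, M.IsPerfectMatching)
    (t : ℕ) (c : Sym2 V → ℕ) (h : IsIntervalColoring G t c) :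
    max G.maxDegree (2 * G.minDegree) ≤ t := by
  obtain ⟨hp, hrange, -, hint⟩ := h
  refine max_le (G.maxDegree_le_of_forall_degree_le t fun v => hp.degree_le v hrange) ?_
  by_contra! ht
  have hmin : ∀ v, G.minDegree ∈ colorsAt G c v := fun v =>
    hp.mem_colorsAt_of_le_degree v hrange (hint v) (G.minDegree_le_degree v) ht
  exact hpm ⟨_, hp.isPerfectMatching_colorClass hmin⟩

/-- If `G` has no perfect matching, then any interval `t`-coloring of `G` satisfies
`t ≥ max {Δ(G), 2·δ(G)}`; in particular `w(G) ≥ max {Δ(G), 2·δ(G)}`. -/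
theorem stmt4 {V : Type*} [Fintype V] [DecidableEq V] (G : SimpleGraph V)
    [DecidableRel G.Adj]
    (hpm : ¬ ∃ M : G.Subgraph, M.IsPerfectMatching)
    (t : ℕ) (c : Sym2 V → ℕ) (h : IsIntervalColoring G t c) :
    max G.maxDegree (2 * G.minDegree) ≤ t :=
  stmt4_general G hpm t c h
end

section
/- Let G be a graph with all vertex degrees odd, such that |E(G)| − |V(G)|/2 is odd. If G is interval colorable, then w(G) ≥ max{Δ(G), 2·δ(G)}. -/
open Finset

theorem Nat.card_filter_odd_Ico (a b : ℕ) : #{x ∈ Ico a b | Odd x} = b / 2 - a / 2 := by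
  induction b with
  | zero => simp
  | succ b ih =>
    by_cases hab : a ≤ b
    · rw [Nat.Ico_succ_right_eq_insert_Ico hab, filter_insert]
      by_cases hb : Odd b
      · rw [if_pos hb, card_insert_of_notMem (by simp), ih]
        rw [Nat.odd_iff] at hb
        omega
      · rw [if_neg hb, ih]
        rw [Nat.not_odd_iff] at hb
        omega
    · rw [Ico_eq_empty (by omega)]
      simp only [filter_empty, card_empty]
      omega

theorem IsIntervalSet.finset_eq_Ico {S : Finset ℕ} (h : IsIntervalSet ↑S) (hS : S.Nonempty) :
    S = Ico (S.min' hS) (S.min' hS + #S) := by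
  have hIcc : S = Icc (S.min' hS) (S.max' hS) :=
    Subset.antisymm (fun x hx => mem_Icc.2 ⟨min'_le _ _ hx, le_max' _ _ hx⟩) fun x hx =>
      h _ _ _ (min'_mem _ _) (max'_mem _ _) (mem_Icc.1 hx).1 (mem_Icc.1 hx).2
  have hcard : #S = S.max' hS + 1 - S.min' hS := by
    conv_lhs => rw [hIcc]
    exact Nat.card_Icc _ _
  have hle := min'_le_max' S hS
  rw [hcard, show S.min' hS + (S.max' hS + 1 - S.min' hS) = S.max' hS + 1 by omega,
    Finset.Ico_add_one_right_eq_Icc]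
  exact hIcc

namespace SimpleGraph

variable {V : Type*} [Fintype V] (G : SimpleGraph V) [DecidableRel G.Adj]

theorem even_card_of_forall_odd_degree (h : ∀ v, Odd (G.degree v)) : Even (Fintype.card V) := by
  simpa [h] using G.even_card_odd_degree_vertices

theorem sum_card_filter_incidenceFinset [DecidableEq V] (p : Sym2 V → Prop) [DecidablePred p] :
    ∑ v, #{e ∈ G.incidenceFinset v | p e} = 2 * #{e ∈ G.edgeFinset | p e} := by
  calc ∑ v, #{e ∈ G.incidenceFinset v | p e}
      = ∑ v, #({e ∈ G.edgeFinset | p e}.bipartiteAbove (· ∈ ·) v) := by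
        simp only [bipartiteAbove, incidenceFinset_eq_filter, filter_filter, and_comm]
    _ = ∑ e ∈ G.edgeFinset with p e, #(univ.bipartiteBelow (· ∈ ·) e) :=
        sum_card_bipartiteAbove_eq_sum_card_bipartiteBelow _
    _ = ∑ e ∈ G.edgeFinset with p e, 2 := by
        refine sum_congr rfl fun e he => ?_
        rw [← Sym2.card_toFinset_of_not_isDiag e
          (G.not_isDiag_of_mem_edgeFinset (mem_filter.1 he).1)]
        congr 1
        ext v
        simp [bipartiteBelow]
    _ = 2 * #{e ∈ G.edgeFinset | p e} := by rw [sum_const, smul_eq_mul, mul_comm]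

end SimpleGraph

section IntervalColoring

variable {V : Type*} [Fintype V] [DecidableEq V] {G : SimpleGraph V} [DecidableRel G.Adj]
  {c : Sym2 V → ℕ}

theorem coe_image_incidenceFinset_eq_colorsAt (v : V) :
    ↑((G.incidenceFinset v).image c) = colorsAt G c v := by
  ext i
  simp [colorsAt, SimpleGraph.incidenceSet, and_assoc]

theorem IsProperEdgeColoring.injOn_incidenceFinset (hc : IsProperEdgeColoring G c) (v : V) :
    Set.InjOn c (G.incidenceFinset v) := by
  intro e₁ he₁ e₂ he₂ hce
  by_contra hne
  simp only [SimpleGraph.coe_incidenceFinset] at he₁ he₂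
  exact hc e₁ he₁.1 e₂ he₂.1 hne ⟨v, he₁.2, he₂.2⟩ hce

theorem IsProperEdgeColoring.card_filter_image_incidenceFinset (hc : IsProperEdgeColoring G c)
    (v : V) (q : ℕ → Prop) [DecidablePred q] :
    #{i ∈ (G.incidenceFinset v).image c | q i} = #{e ∈ G.incidenceFinset v | q (c e)} := by
  rw [filter_image]
  exact card_image_of_injOn ((hc.injOn_incidenceFinset v).mono (by simp))

theorem IsProperEdgeColoring.sum_card_filter_image_incidenceFinset
    (hc : IsProperEdgeColoring G c) (q : ℕ → Prop) [DecidablePred q] :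
    ∑ v, #{i ∈ (G.incidenceFinset v).image c | q i} = 2 * #{e ∈ G.edgeFinset | q (c e)} := by
  simp only [hc.card_filter_image_incidenceFinset]
  exact G.sum_card_filter_incidenceFinset _

theorem IsIntervalColoring.exists_image_incidenceFinset_eq_Ico {t : ℕ}
    (h : IsIntervalColoring G t c) (v : V) :
    ∃ a, 1 ≤ a ∧ a + G.degree v ≤ t + 1 ∧
      (G.incidenceFinset v).image c = Ico a (a + G.degree v) := by
  obtain ⟨hc, hrange, -, hint⟩ := h
  set S := (G.incidenceFinset v).image c with hS_def
  have hcard : #S = G.degree v := by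
    rw [card_image_of_injOn (hc.injOn_incidenceFinset v), G.card_incidenceFinset_eq_degree]
  have hS_Icc : ∀ i ∈ S, i ∈ Set.Icc 1 t := by
    simp only [S, mem_image, SimpleGraph.mem_incidenceFinset]
    rintro _ ⟨e, he, rfl⟩
    exact hrange e he.1
  rcases S.eq_empty_or_nonempty with hS | hS
  · rw [hS, card_empty] at hcard
    exact ⟨1, le_rfl, by omega, by rw [hS, ← hcard]; simp⟩
  have hIco := IsIntervalSet.finset_eq_Ico (by rw [hS_def, coe_image_incidenceFinset_eq_colorsAt]; exact hint v)
    hS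
  rw [hcard] at hIco
  have hpos : 0 < G.degree v := hcard ▸ hS.card_pos
  have hmin := min'_mem S hS
  generalize S.min' hS = a at hIco hmin
  have hlast : a + G.degree v - 1 ∈ S := by
    rw [hIco, mem_Ico]
    omega
  exact ⟨a, (hS_Icc a hmin).1, by have := (hS_Icc _ hlast).2; omega, hIco⟩

variable {a : V → ℕ}

theorem IsProperEdgeColoring.odd_sum_of_image_incidenceFinset_eq_Ico
    (hc : IsProperEdgeColoring G c)
    (hS : ∀ v, (G.incidenceFinset v).image c = Ico (a v) (a v + G.degree v))
    (hdeg : ∀ v, Odd (G.degree v))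
    (hodd : Odd ((#G.edgeFinset : ℤ) - (Fintype.card V : ℤ) / 2)) : Odd (∑ v, a v) := by
  have hv : ∀ v, 2 * #{i ∈ (G.incidenceFinset v).image c | Odd i} + 1
      = G.degree v + 2 * (a v % 2) := by
    intro v
    rw [hS v, Nat.card_filter_odd_Ico]
    have := Nat.odd_iff.1 (hdeg v)
    omega
  have hsum := sum_congr rfl fun v (_ : v ∈ univ) => hv v
  simp only [sum_add_distrib, ← mul_sum, sum_const, card_univ, smul_eq_mul, mul_one,
    hc.sum_card_filter_image_incidenceFinset, G.sum_degrees_eq_twice_card_edges] at hsum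
  have hmod : (∑ v, a v) % 2 = (∑ v, a v % 2) % 2 := sum_nat_mod _ _ _
  obtain ⟨k, hk⟩ := hodd
  rw [Nat.odd_iff]
  omega

theorem IsProperEdgeColoring.even_sum_of_image_incidenceFinset_eq_Ico
    (hc : IsProperEdgeColoring G c)
    (hS : ∀ v, (G.incidenceFinset v).image c = Ico (a v) (a v + G.degree v))
    (hn : Even (Fintype.card V)) {k : ℕ} (hk : ∀ v, a v ≤ k ∧ k ≤ a v + G.degree v) :
    Even (∑ v, a v) := by
  have hv : ∀ v, #{i ∈ (G.incidenceFinset v).image c | i < k} + a v = k := by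
    intro v
    rw [hS v, Ico_filter_lt, Nat.card_Ico]
    have := hk v
    omega
  have hsum := sum_congr rfl fun v (_ : v ∈ univ) => hv v
  rw [sum_add_distrib, hc.sum_card_filter_image_incidenceFinset, sum_const, card_univ,
    smul_eq_mul] at hsum
  exact (Nat.even_add.1 (hsum ▸ hn.mul_right k)).1 (even_two_mul _)

end IntervalColoring

/-- If all degrees of `G` are odd and `|E(G)| − |V(G)|/2` is odd, then any interval
`t`-coloring of `G` satisfies `t ≥ max {Δ(G), 2·δ(G)}`. -/
theorem stmt5 {V : Type*} [Fintype V] [DecidableEq V] (G : SimpleGraph V)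
    [DecidableRel G.Adj]
    (hoddG : ∀ v : V, Odd (G.degree v))
    (hodd : Odd ((G.edgeFinset.card : ℤ) - (Fintype.card V : ℤ) / 2))
    (t : ℕ) (c : Sym2 V → ℕ) (h : IsIntervalColoring G t c) :
    max G.maxDegree (2 * G.minDegree) ≤ t := by
  choose a ha_pos ha_le hS using h.exists_image_incidenceFinset_eq_Ico
  refine max_le (G.maxDegree_le_of_forall_degree_le t fun v => by grind) ?_
  by_contra! ht
  have hk : ∀ v, a v ≤ G.minDegree + 1 ∧ G.minDegree + 1 ≤ a v + G.degree v := fun v => by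
    have := G.minDegree_le_degree v
    grind
  exact Nat.not_even_iff_odd.2 (h.1.odd_sum_of_image_incidenceFinset_eq_Ico hS hoddG hodd)
    (h.1.even_sum_of_image_incidenceFinset_eq_Ico hS (G.even_card_of_forall_odd_degree hoddG) hk)
end

section
/- If G is a 2-connected multigraph admitting an interval t-coloring, then t ≤ 1 + ⌊|V(G)|/2⌋·(Δ(G) − 1). -/
/-- A finite loopless multigraph: an edge-indexed family of unordered pairs of
vertices, none of which is a loop. -/
structure Multigraph (V E : Type*) where
  /-- the endpoints of an edge -/
  ends : E → Sym2 V
  loopless : ∀ e, ¬ (ends e).IsDiag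

namespace Multigraph

variable {V E : Type*} (G : Multigraph V E)

/-- `v` is an endpoint of `e`. -/
def Inc (v : V) (e : E) : Prop := v ∈ G.ends e

/-- The degree of a vertex: the number of edges incident to it. -/
noncomputable def degree (v : V) : ℕ := Nat.card {e : E // G.Inc v e}

/-- The maximum degree `Δ(G)`. -/
noncomputable def maxDegree : ℕ := sSup (Set.range G.degree)

/-- Two vertices are adjacent if some edge joins them. -/
def Adj (a b : V) : Prop := ∃ e, G.ends e = s(a, b)

/-- `G` is connected. -/
def Connected : Prop := Nonempty V ∧ ∀ u w : V, Relation.ReflTransGen G.Adj u w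

/-- `G` is 2-connected: it is connected and removing any single vertex leaves it
connected (any two vertices distinct from `v` are joined by a walk avoiding `v`). -/
def TwoConnected : Prop :=
  G.Connected ∧ ∀ v u w : V, u ≠ v → w ≠ v →
    Relation.ReflTransGen (fun a b => G.Adj a b ∧ a ≠ v ∧ b ≠ v) u w

/-- An interval `t`-coloring of the multigraph `G`: a proper edge coloring with
colors `1,…,t`, each color used at least once, such that the colors on the edges
incident to every vertex form an interval of consecutive integers. -/
def IsIntervalColoring (t : ℕ) (c : E → ℕ) : Prop :=
  (∀ e₁ e₂ : E, e₁ ≠ e₂ → (∃ v, G.Inc v e₁ ∧ G.Inc v e₂) → c e₁ ≠ c e₂) ∧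
  (∀ e, c e ∈ Set.Icc 1 t) ∧
  (∀ i ∈ Set.Icc 1 t, ∃ e, c e = i) ∧
  (∀ (v : V) (i j k : ℕ), (∃ e, G.Inc v e ∧ c e = i) → (∃ e, G.Inc v e ∧ c e = j) →
    i ≤ k → k ≤ j → ∃ e, G.Inc v e ∧ c e = k)

/-- `G` has a cycle of length `n`: `n ≥ 2` distinct vertices and `n` distinct edges
arranged cyclically. -/
def HasCycleOfLength (n : ℕ) : Prop :=
  2 ≤ n ∧ ∃ (f : ZMod n → V) (g : ZMod n → E),
    Function.Injective f ∧ Function.Injective g ∧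
    ∀ i : ZMod n, G.ends (g i) = s(f i, f (i + 1))

end Multigraph


/-!
Let `e₁` and `eₜ` be edges of colours `1` and `t`, and measure distances to the end vertices
`a, b` of `e₁`. Two edges sharing a vertex of degree at most `Δ` have colours differing by at
most `Δ - 1`, so following a shortest path from `e₁` to the nearer end `x` of `eₜ`, at distance
`d`, gives `t ≤ 1 + (d + 1)(Δ - 1)`. On the other hand each distance level `i < d` contains two
vertices, since the distance rises in steps of at most one along any path: take one on a path
from `a` to `x`, and another on a path from `a` or `b` to `x` avoiding the first, which exists
by 2-connectivity. Together with the two ends of `eₜ` this gives `2d + 2 ≤ |V|`.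
-/

theorem Relation.ReflTransGen.exists_eq_of_le_add_one {α : Type*} {r : α → α → Prop}
    {P : α → Prop} {f : α → ℕ} (hf : ∀ p q, r p q → f q ≤ f p + 1)
    (hP : ∀ p q, r p q → P q) {u w : α} (h : Relation.ReflTransGen r u w) (hu : P u)
    {i : ℕ} (hui : f u ≤ i) (hiw : i ≤ f w) : ∃ z, P z ∧ f z = i := by
  induction h with
  | refl => exact ⟨u, hu, le_antisymm hui hiw⟩
  | @tail p q _ hpq ih =>
    by_cases hip : i ≤ f p
    · exact ih hip
    · exact ⟨q, hP p q hpq, by have := hf p q hpq; omega⟩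

namespace Multigraph

variable {V E : Type*} (G : Multigraph V E)

open Finset

def toSimpleGraph : SimpleGraph V where
  Adj := G.Adj
  symm := ⟨fun _ _ ⟨e, he⟩ => ⟨e, he.trans Sym2.eq_swap⟩⟩
  loopless := ⟨fun _ ⟨e, he⟩ => G.loopless e (he ▸ Sym2.mk_isDiag_iff.2 rfl)⟩

variable {G}

lemma Connected.toSimpleGraph (hG : G.Connected) : G.toSimpleGraph.Connected :=
  have := hG.1
  ⟨fun u w => (SimpleGraph.reachable_iff_reflTransGen u w).2 (hG.2 u w)⟩

lemma exists_ends_eq (e : E) : ∃ a b, G.ends e = s(a, b) := by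
  induction G.ends e using Sym2.ind with
  | h a b => exact ⟨a, b, rfl⟩

lemma exists_ends_eq_and_le (e : E) (g : V → ℕ) :
    ∃ x y, G.ends e = s(x, y) ∧ g x ≤ g y := by
  obtain ⟨x, y, hxy⟩ := G.exists_ends_eq e
  rcases le_total (g x) (g y) with hle | hle
  · exact ⟨x, y, hxy, hle⟩
  · exact ⟨y, x, hxy.trans Sym2.eq_swap, hle⟩

lemma inc_left {e : E} {a b : V} (h : G.ends e = s(a, b)) : G.Inc a e := by
  simp [Inc, h]

lemma inc_right {e : E} {a b : V} (h : G.ends e = s(a, b)) : G.Inc b e := by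
  simp [Inc, h]

lemma ne_of_ends_eq {e : E} {a b : V} (h : G.ends e = s(a, b)) : a ≠ b :=
  (show G.toSimpleGraph.Adj a b from ⟨e, h⟩).ne

lemma degree_le_maxDegree [Finite V] (v : V) : G.degree v ≤ G.maxDegree :=
  le_csSup (Set.finite_range _).bddAbove ⟨v, rfl⟩

lemma one_le_degree [Finite E] {v : V} {e : E} (he : G.Inc v e) : 1 ≤ G.degree v :=
  have : Nonempty {e // G.Inc v e} := ⟨⟨e, he⟩⟩
  Nat.card_pos

namespace IsIntervalColoring

variable [Finite E] {t : ℕ} {c : E → ℕ}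

/-- The colours at `v` fill the whole interval between any two of them, and there are at most
`deg v` of them. -/
lemma color_add_one_le_add_degree (h : G.IsIntervalColoring t c) {v : V} {e e' : E}
    (he : G.Inc v e) (he' : G.Inc v e') : c e' + 1 ≤ c e + G.degree v := by
  have hsub : Set.Icc (c e) (c e') ⊆ c '' {f | G.Inc v f} := fun k hk => by
    obtain ⟨f, hf, rfl⟩ := h.2.2.2 v _ _ k ⟨e, he, rfl⟩ ⟨e', he', rfl⟩ hk.1 hk.2
    exact ⟨f, hf, rfl⟩
  have hcard : c e' + 1 - c e ≤ G.degree v :=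
    calc c e' + 1 - c e = (Set.Icc (c e) (c e')).ncard := (Set.ncard_Icc_nat _ _).symm
      _ ≤ (c '' {f | G.Inc v f}).ncard := Set.ncard_le_ncard hsub
      _ ≤ {f | G.Inc v f}.ncard := Set.ncard_image_le
      _ = G.degree v := rfl
  omega

lemma color_le_add_maxDegree_sub_one [Finite V] (h : G.IsIntervalColoring t c) {v : V}
    {e e' : E} (he : G.Inc v e) (he' : G.Inc v e') : c e' ≤ c e + (G.maxDegree - 1) := by
  have := h.color_add_one_le_add_degree he he'
  have := G.degree_le_maxDegree v
  have := one_le_degree he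
  omega

lemma color_le_of_walk [Finite V] (h : G.IsIntervalColoring t c) {u w : V}
    (p : G.toSimpleGraph.Walk u w) {e e' : E} (he : G.Inc u e) (he' : G.Inc w e') :
    c e' ≤ c e + (p.length + 1) * (G.maxDegree - 1) := by
  induction p generalizing e with
  | nil => simpa using h.color_le_add_maxDegree_sub_one he he'
  | cons hadj p ih =>
    obtain ⟨f, hf⟩ := id hadj
    have h₁ := h.color_le_add_maxDegree_sub_one he (inc_left hf)
    have h₂ := ih (inc_right hf) he'
    rw [SimpleGraph.Walk.length_cons, add_one_mul]
    linarith

end IsIntervalColoring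

namespace TwoConnected

variable [Fintype V] {f : V → ℕ} {a b : V}

lemma one_lt_card_fiber (hG : G.TwoConnected) (hf : ∀ u w, G.Adj u w → f w ≤ f u + 1)
    (hab : a ≠ b) (ha : f a = 0) (hb : f b = 0) {x : V} {i : ℕ} (hi : i < f x) :
    1 < #{z | f z = i} := by
  obtain ⟨v, -, hv⟩ := (hG.1.2 a x).exists_eq_of_le_add_one (P := fun _ => True) hf
    (fun _ _ _ => trivial) trivial (by omega) hi.le
  obtain ⟨s, hsv, hs⟩ : ∃ s, s ≠ v ∧ f s = 0 := by
    by_cases hav : a = v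
    · exact ⟨b, hav ▸ hab.symm, hb⟩
    · exact ⟨a, hav, ha⟩
  have hxv : x ≠ v := by rintro rfl; omega
  obtain ⟨z, hzv, hz⟩ := (hG.2 v s x hsv hxv).exists_eq_of_le_add_one
    (fun p q hpq => hf p q hpq.1) (fun _ _ hpq => hpq.2.2) hsv (by omega) hi.le
  exact one_lt_card.2 ⟨v, by simpa using hv, z, by simpa using hz, hzv.symm⟩

lemma two_mul_add_two_le_card (hG : G.TwoConnected) (hf : ∀ u w, G.Adj u w → f w ≤ f u + 1)
    (hab : a ≠ b) (ha : f a = 0) (hb : f b = 0) {x y : V} (hxy : x ≠ y) {d : ℕ}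
    (hx : d ≤ f x) (hy : d ≤ f y) : 2 * d + 2 ≤ Fintype.card V := by
  have hlow : 2 * #(range d) ≤ #{z | f z < d} :=
    mul_card_image_le_card_of_maps_to (f := f) (by simp) 2 fun i hi => by
      have hi : i < d := mem_range.1 hi
      refine (hG.one_lt_card_fiber hf hab ha hb (lt_of_lt_of_le hi hx)).trans_le
        (card_le_card fun z hz => ?_)
      simp only [mem_filter, mem_univ, true_and] at hz ⊢
      omega
  have hhigh : 2 ≤ #{z | ¬ f z < d} :=
    one_lt_card.2 ⟨x, by simp; omega, y, by simp; omega, hxy⟩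
  have := card_filter_add_card_filter_not (s := univ) (fun z => f z < d)
  simp only [card_range, card_univ] at hlow this
  omega

end TwoConnected

end Multigraph

open Multigraph in
/-- If `G` is a 2-connected multigraph admitting an interval `t`-coloring, then
`t ≤ 1 + ⌊|V(G)|/2⌋·(Δ(G) − 1)`. -/
theorem stmt7 {V E : Type*} [Fintype V] [Fintype E] (G : Multigraph V E)
    (h2c : G.TwoConnected) (t : ℕ) (c : E → ℕ) (h : G.IsIntervalColoring t c) :
    t ≤ 1 + Fintype.card V / 2 * (G.maxDegree - 1) := by
  obtain rfl | ht := Nat.eq_zero_or_pos t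
  · exact Nat.zero_le _
  obtain ⟨e₁, he₁⟩ := h.2.2.1 1 ⟨le_rfl, ht⟩
  obtain ⟨eₜ, heₜ⟩ := h.2.2.1 t ⟨ht, le_rfl⟩
  obtain ⟨a, b, hab⟩ := G.exists_ends_eq e₁
  set H := G.toSimpleGraph
  set D : V → ℕ := fun v => min (H.dist a v) (H.dist b v) with hD
  have hDadj : ∀ u w, G.Adj u w → D w ≤ D u + 1 := fun u w huw => by
    have := SimpleGraph.Adj.diff_dist_adj (G := H) (u := a) huw
    have := SimpleGraph.Adj.diff_dist_adj (G := H) (u := b) huw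
    simp only [hD]
    omega
  obtain ⟨x, y, hxy, hDxy⟩ := G.exists_ends_eq_and_le eₜ D
  obtain ⟨s, hs, hsx⟩ : ∃ s, G.Inc s e₁ ∧ H.dist s x = D x :=
    (min_choice (H.dist a x) (H.dist b x)).elim (fun hm => ⟨a, inc_left hab, hm.symm⟩)
      (fun hm => ⟨b, inc_right hab, hm.symm⟩)
  obtain ⟨p, hp⟩ := h2c.1.toSimpleGraph.exists_walk_length_eq_dist s x
  have hcolor := h.color_le_of_walk p hs (inc_left hxy)
  rw [hp, hsx, he₁, heₜ] at hcolor
  have hcount := h2c.two_mul_add_two_le_card hDadj (ne_of_ends_eq hab) (by simp [hD])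
    (by simp [hD]) (ne_of_ends_eq hxy) le_rfl hDxy
  calc t ≤ 1 + (D x + 1) * (G.maxDegree - 1) := hcolor
    _ ≤ 1 + Fintype.card V / 2 * (G.maxDegree - 1) := by gcongr; omega
end

section
/- If G is a connected cubic (3-regular) multigraph admitting an interval t-coloring, then t ≤ |V(G)| + 1. -/
/-!
Every vertex `v` sees an interval `[a v, a v + 2]` of colors. The edges of one color form a
matching, so for every color `k` the number of vertices seeing `k`, which is the sum of the fibers
`{v | a v = j}` over `j ∈ [k - 2, k]`, is even; inductively every fiber is even. By connectivity,
for each `i < t - 1` some vertex sees both `i + 1` and `i + 2`, so the even set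
`{v | a v ∈ [i, i + 1]}` is nonempty and has at least two elements. Each vertex lies in at most
two of these `t - 1` sets, so `2 (t - 1) ≤ 2 |V|`.
-/

open Finset

lemma Set.OrdConnected.eq_Ico_sInf_ncard {s : Set ℕ} (hs : s.OrdConnected) (hfin : s.Finite) :
    s = Set.Ico (sInf s) (sInf s + s.ncard) := by
  rcases s.eq_empty_or_nonempty with rfl | hne
  · simp
  have hIcc : s = Set.Icc (sInf s) (sSup s) :=
    (hne.ordConnected_iff_of_bdd (OrderBot.bddBelow s) hfin.bddAbove).1 hs
  have hle : sInf s ≤ sSup s := csInf_le_csSup hne (OrderBot.bddBelow s) hfin.bddAbove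
  have hcard : s.ncard = sSup s + 1 - sInf s := by
    conv_lhs => rw [hIcc]
    exact Set.ncard_Icc_nat _ _
  calc s = Set.Icc (sInf s) (sSup s) := hIcc
    _ = Set.Ico (sInf s) (sInf s + s.ncard) := by
      ext k
      simp only [Set.mem_Icc, Set.mem_Ico, hcard]
      omega

section LowestColor

variable {V : Type*} [Fintype V] (a : V → ℕ)

lemma card_filter_le_lt_add_three_eq (k : ℕ) :
    #{v | a v ≤ k ∧ k < a v + 3} = #{v | a v = k} + #{v | a v + 1 = k} + #{v | a v + 2 = k} := by
  simp only [card_filter, ← sum_add_distrib]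
  exact sum_congr rfl fun v _ => by split_ifs <;> omega

lemma even_card_fiber_of_even_card_le_lt_add_three (h : ∀ k, Even #{v | a v ≤ k ∧ k < a v + 3}) :
    ∀ j, Even #{v | a v = j}
  | 0 => by simpa [card_filter_le_lt_add_three_eq] using h 0
  | 1 => by
    have h1 := h 1
    rw [card_filter_le_lt_add_three_eq] at h1
    simpa [Nat.even_add, even_card_fiber_of_even_card_le_lt_add_three h 0] using h1
  | j + 2 => by
    have h2 := h (j + 2)
    rw [card_filter_le_lt_add_three_eq] at h2
    simpa [Nat.even_add, even_card_fiber_of_even_card_le_lt_add_three h j,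
      even_card_fiber_of_even_card_le_lt_add_three h (j + 1)] using h2

lemma even_card_filter_mem_of_even_card_fiber (h : ∀ j, Even #{v | a v = j}) (S : Finset ℕ) :
    Even #{v | a v ∈ S} := by
  rw [← sum_card_fiberwise_eq_card_filter]
  exact even_sum _ fun j _ => h j

lemma le_card_of_two_le_card_filter_mem_Icc {n : ℕ}
    (h : ∀ i < n, 2 ≤ #{v | a v ∈ Icc i (i + 1)}) : n ≤ Fintype.card V := by
  have hcount := card_mul_le_card_mul (fun i v => a v ∈ Icc i (i + 1)) (s := range n) (t := univ)
    (m := 2) (n := 2) (fun i hi => h i (mem_range.1 hi)) fun v _ => by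
      calc #((range n).bipartiteBelow (fun i v => a v ∈ Icc i (i + 1)) v)
          ≤ #{a v - 1, a v} := card_le_card fun i hi => by
            simp only [bipartiteBelow, mem_filter, mem_range, mem_Icc] at hi
            simp only [mem_insert, mem_singleton]
            omega
        _ ≤ 2 := card_le_two
  simpa using hcount

end LowestColor

namespace Multigraph

variable {V E : Type*} {G : Multigraph V E} {c : E → ℕ}

variable (G) in
def IsProperEdgeColoring (c : E → ℕ) : Prop :=
  ∀ e₁ e₂ : E, e₁ ≠ e₂ → (∃ v, G.Inc v e₁ ∧ G.Inc v e₂) → c e₁ ≠ c e₂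

variable (G) in
def colorsAt (c : E → ℕ) (v : V) : Set ℕ := {k | ∃ e, G.Inc v e ∧ c e = k}

lemma IsIntervalColoring.isProperEdgeColoring {t : ℕ} (h : G.IsIntervalColoring t c) :
    G.IsProperEdgeColoring c :=
  h.1

lemma IsIntervalColoring.ordConnected_colorsAt {t : ℕ} (h : G.IsIntervalColoring t c) (v : V) :
    (G.colorsAt c v).OrdConnected :=
  ⟨fun _ hi _ hj k hk => h.2.2.2 v _ _ k hi hj hk.1 hk.2⟩

lemma finite_colorsAt [Finite E] (v : V) : (G.colorsAt c v).Finite :=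
  (Set.finite_range c).subset fun _ ⟨e, _, hce⟩ => ⟨e, hce⟩

lemma IsProperEdgeColoring.ncard_colorsAt (hc : G.IsProperEdgeColoring c) (v : V) :
    (G.colorsAt c v).ncard = G.degree v := by
  have himage : G.colorsAt c v = c '' {e | G.Inc v e} := by
    ext k
    simp [colorsAt]
  rw [himage, Set.InjOn.ncard_image, degree, ← Nat.card_coe_set_eq]
  · rfl
  · exact fun e₁ h₁ e₂ h₂ hce => by_contra fun hne => hc e₁ e₂ hne ⟨v, h₁, h₂⟩ hce

lemma IsIntervalColoring.colorsAt_eq_Ico [Finite E] {t : ℕ} (h : G.IsIntervalColoring t c)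
    (v : V) :
    G.colorsAt c v = Set.Ico (sInf (G.colorsAt c v)) (sInf (G.colorsAt c v) + G.degree v) := by
  rw [← h.isProperEdgeColoring.ncard_colorsAt v]
  exact (h.ordConnected_colorsAt v).eq_Ico_sInf_ncard (finite_colorsAt v)

lemma IsProperEdgeColoring.even_ncard_setOf_mem_colorsAt [Fintype E]
    (hc : G.IsProperEdgeColoring c) (k : ℕ) : Even {v | k ∈ G.colorsAt c v}.ncard := by
  classical
  have hunion : {v | k ∈ G.colorsAt c v} =
      ↑(({e | c e = k} : Finset E).biUnion fun e => (G.ends e).toFinset) := by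
    ext v
    simp [colorsAt, Inc, and_comm]
  rw [hunion, Set.ncard_coe_finset, card_biUnion]
  · exact even_sum _ fun e _ => by
      rw [Sym2.card_toFinset_of_not_isDiag _ (G.loopless e)]
      exact even_two
  · intro e₁ h₁ e₂ h₂ hne
    have hc₁ : c e₁ = k := by simpa using h₁
    have hc₂ : c e₂ = k := by simpa using h₂
    exact disjoint_left.2 fun v hv₁ hv₂ =>
      hc e₁ e₂ hne ⟨v, Sym2.mem_toFinset.1 hv₁, Sym2.mem_toFinset.1 hv₂⟩ (hc₁.trans hc₂.symm)

lemma Connected.exists_mem_colorsAt_and_succ_mem (hconn : G.Connected)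
    (hint : ∀ v, (G.colorsAt c v).OrdConnected) {k : ℕ} (hk : ∃ e, c e = k)
    (hk' : ∃ e, c e = k + 1) : ∃ v, k ∈ G.colorsAt c v ∧ k + 1 ∈ G.colorsAt c v := by
  by_contra! hsplit
  -- then every vertex sees only colors `≤ k` or only colors `> k`, and an edge cannot join the two
  have hlow_or_high : ∀ v, (∀ j ∈ G.colorsAt c v, j ≤ k) ∨ ∀ j ∈ G.colorsAt c v, k < j := by
    intro v
    by_contra! ⟨⟨i, hi, hik⟩, j, hj, hjk⟩
    exact hsplit v (hint v |>.out hj hi ⟨hjk, hik.le⟩) (hint v |>.out hj hi ⟨by omega, hik⟩)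
  have hlow_adj : ∀ x y, G.Adj x y → (∀ j ∈ G.colorsAt c x, j ≤ k) →
      ∀ j ∈ G.colorsAt c y, j ≤ k := by
    rintro x y ⟨e, he⟩ hx
    have hek : c e ≤ k := hx _ ⟨e, by simp [Inc, he], rfl⟩
    refine (hlow_or_high y).resolve_right fun hy => ?_
    have := hy _ ⟨e, by simp [Inc, he], rfl⟩
    omega
  obtain ⟨e, rfl⟩ := hk
  obtain ⟨e', he'⟩ := hk'
  obtain ⟨u, hu⟩ : ∃ u, G.Inc u e := ⟨_, Sym2.out_fst_mem _⟩
  have hu_low : ∀ j ∈ G.colorsAt c u, j ≤ c e :=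
    (hlow_or_high u).resolve_right fun h => (h _ ⟨e, hu, rfl⟩).false
  have hall_low (w : V) : ∀ j ∈ G.colorsAt c w, j ≤ c e := by
    induction hconn.2 u w with
    | refl => exact hu_low
    | tail _ hadj ih => exact hlow_adj _ _ hadj ih
  have := hall_low _ _ ⟨e', Sym2.out_fst_mem _, he'⟩
  omega

end Multigraph

/-- If `G` is a connected cubic multigraph admitting an interval `t`-coloring, then
`t ≤ |V(G)| + 1`. -/
theorem stmt8 {V E : Type*} [Fintype V] [Fintype E] (G : Multigraph V E)
    (hconn : G.Connected) (hcubic : ∀ v : V, G.degree v = 3)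
    (t : ℕ) (c : E → ℕ) (h : G.IsIntervalColoring t c) :
    t ≤ Fintype.card V + 1 := by
  obtain ⟨a, ha⟩ : ∃ a : V → ℕ, ∀ v, G.colorsAt c v = Set.Ico (a v) (a v + 3) :=
    ⟨_, fun v => by rw [h.colorsAt_eq_Ico v, hcubic v]⟩
  have hwindow : ∀ k, Even #{v | a v ≤ k ∧ k < a v + 3} := fun k => by
    simpa [ha, Set.ncard_eq_toFinset_card'] using
      h.isProperEdgeColoring.even_ncard_setOf_mem_colorsAt k
  have hfiber := even_card_fiber_of_even_card_le_lt_add_three a hwindow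
  have hcut : ∀ i < t - 1, 2 ≤ #{v | a v ∈ Icc i (i + 1)} := by
    intro i hi
    obtain ⟨v, hv, hv'⟩ := hconn.exists_mem_colorsAt_and_succ_mem h.ordConnected_colorsAt
      (h.2.2.1 (i + 1) ⟨by omega, by omega⟩) (h.2.2.1 (i + 2) ⟨by omega, by omega⟩)
    rw [ha, Set.mem_Ico] at hv hv'
    have hpos : 0 < #{v | a v ∈ Icc i (i + 1)} :=
      card_pos.2 ⟨v, by simp only [mem_filter, mem_univ, mem_Icc, true_and]; omega⟩
    have heven :=
      Nat.even_iff.1 (even_card_filter_mem_of_even_card_fiber a hfiber (Icc i (i + 1)))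
    omega
  have := le_card_of_two_le_card_filter_mem_Icc a hcut
  omega
end

section
/- If G is a connected r-regular multigraph admitting an interval t-coloring, then t ≤ 1 + ⌊|V(G)|/2⌋·(r − 1). -/
/-- A finset closed under a fixed-point-free involution has even cardinality. -/
lemma even_card_of_invol {α : Type*} [DecidableEq α] (f : α → α)
    (hinv : ∀ a, f (f a) = a) (hne : ∀ a, f a ≠ a) :
    ∀ s : Finset α, (∀ a ∈ s, f a ∈ s) → Even s.card := by
  intro s
  induction s using Finset.strongInduction with
  | _ s ih =>
    intro hclosed
    rcases s.eq_empty_or_nonempty with rfl | ⟨a, ha⟩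
    · simp
    · have hfa : f a ∈ s := hclosed a ha
      have hne' : f a ≠ a := hne a
      have hss : (s.erase a).erase (f a) ⊂ s :=
        ((Finset.erase_subset _ _).trans_ssubset (Finset.erase_ssubset ha))
      have hcl' : ∀ b ∈ (s.erase a).erase (f a), f b ∈ (s.erase a).erase (f a) := by
        intro b hb
        rw [Finset.mem_erase, Finset.mem_erase] at hb ⊢
        obtain ⟨hbfa, hba, hbs⟩ := hb
        refine ⟨?_, ?_, hclosed b hbs⟩
        · intro hh; apply hba; have := congrArg f hh; rwa [hinv, hinv] at this
        · intro hh; apply hbfa; have := congrArg f hh; rwa [hinv] at this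
      have hev := ih _ hss hcl'
      have hc1 : (s.erase a).card = s.card - 1 := Finset.card_erase_of_mem ha
      have hfae : f a ∈ s.erase a := Finset.mem_erase.mpr ⟨hne', hfa⟩
      have hc2 : ((s.erase a).erase (f a)).card = (s.erase a).card - 1 :=
        Finset.card_erase_of_mem hfae
      have h2 : 2 ≤ s.card := Finset.one_lt_card.mpr ⟨a, ha, f a, hfa, (hne a).symm⟩
      obtain ⟨k, hk⟩ := hev
      exact ⟨k + 1, by omega⟩

/-- If `G` is a connected `r`-regular multigraph admitting an interval
`t`-coloring, then `t ≤ 1 + ⌊|V(G)|/2⌋·(r − 1)`. -/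
theorem stmt9 {V E : Type*} [Fintype V] [Fintype E] (G : Multigraph V E)
    (r : ℕ) (hconn : G.Connected) (hreg : ∀ v : V, G.degree v = r)
    (t : ℕ) (c : E → ℕ) (h : G.IsIntervalColoring t c) :
    t ≤ 1 + Fintype.card V / 2 * (r - 1) := by
  classical
  obtain ⟨hprop, hrange, hused, hint⟩ := h
  rcases isEmpty_or_nonempty E with hE | hE
  · rcases Nat.eq_zero_or_pos t with rfl | ht
    · omega
    · obtain ⟨e, -⟩ := hused 1 ⟨le_refl 1, ht⟩
      exact (hE.false e).elim
  obtain ⟨e₀⟩ := hE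
  set n := Fintype.card V with hn
  have hv₀ : G.Inc (G.ends e₀).out.1 e₀ := Sym2.out_fst_mem _
  have hr : 1 ≤ r := by
    rw [← hreg (G.ends e₀).out.1, Multigraph.degree]
    have hne : Nonempty {e // G.Inc (G.ends e₀).out.1 e} := ⟨⟨e₀, hv₀⟩⟩
    exact Nat.one_le_iff_ne_zero.mpr (Nat.card_ne_zero.mpr ⟨hne, inferInstance⟩)
  have hdeg : ∀ v, (Finset.univ.filter (fun e => G.Inc v e)).card = r := by
    intro v
    have hh := hreg v
    rw [Multigraph.degree, Nat.card_eq_fintype_card, Fintype.card_subtype] at hh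
    exact hh
  set S : V → Finset ℕ := fun v => (Finset.univ.filter (fun e => G.Inc v e)).image c
    with hSdef
  have hSmem : ∀ v i, i ∈ S v ↔ ∃ e, G.Inc v e ∧ c e = i := by
    intro v i
    simp only [hSdef, Finset.mem_image, Finset.mem_filter, Finset.mem_univ, true_and]
  have hScard : ∀ v, (S v).card = r := by
    intro v
    rw [hSdef]
    rw [Finset.card_image_of_injOn, hdeg]
    intro e he e' he' hce
    by_contra hne
    exact hprop e e' hne ⟨v, (Finset.mem_filter.mp he).2, (Finset.mem_filter.mp he').2⟩ hce
  have hSne : ∀ v, (S v).Nonempty := fun v => Finset.card_pos.mp (by rw [hScard]; omega)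
  set m : V → ℕ := fun v => (S v).min' (hSne v) with hmdef
  have hIcc : ∀ v, S v = Finset.Icc (m v) (m v + (r - 1)) := by
    intro v
    have hmax := (S v).max'_mem (hSne v)
    have hmin := (S v).min'_mem (hSne v)
    have hsub : S v ⊆ Finset.Icc (m v) ((S v).max' (hSne v)) := fun i hi =>
      Finset.mem_Icc.mpr ⟨Finset.min'_le _ _ hi, Finset.le_max' _ _ hi⟩
    have hsup : Finset.Icc (m v) ((S v).max' (hSne v)) ⊆ S v := by
      intro k hk
      rw [Finset.mem_Icc] at hk
      exact (hSmem v k).mpr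
        (hint v (m v) ((S v).max' (hSne v)) k ((hSmem v _).mp hmin) ((hSmem v _).mp hmax)
          hk.1 hk.2)
    have heq : S v = Finset.Icc (m v) ((S v).max' (hSne v)) :=
      Finset.Subset.antisymm hsub hsup
    have hcard := congrArg Finset.card heq
    rw [hScard v, Nat.card_Icc] at hcard
    have hle : m v ≤ (S v).max' (hSne v) := Finset.min'_le _ _ hmax
    have hM : (S v).max' (hSne v) = m v + (r - 1) := by omega
    rw [hM] at heq
    exact heq
  have hmbound : ∀ v, 1 ≤ m v ∧ m v + (r - 1) ≤ t := by
    intro v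
    have h1 : m v ∈ S v := (S v).min'_mem (hSne v)
    have h2 : m v + (r - 1) ∈ S v := by
      rw [hIcc v]; exact Finset.mem_Icc.mpr ⟨by omega, le_refl _⟩
    obtain ⟨e1, -, hc1⟩ := (hSmem _ _).mp h1
    obtain ⟨e2, -, hc2⟩ := (hSmem _ _).mp h2
    have hb1 := hrange e1
    have hb2 := hrange e2
    rw [Set.mem_Icc] at hb1 hb2
    omega
  -- two colors of edges at the same vertex that agree mod `r` are equal
  have hwin : ∀ v k k', k ∈ S v → k' ∈ S v → k % r = k' % r → k = k' := by
    intro v k k' hk hk' hmod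
    rw [hIcc v, Finset.mem_Icc] at hk hk'
    have hd : (r : ℤ) ∣ (k' : ℤ) - k := (Nat.modEq_iff_dvd).mp hmod
    have habs : |(k' : ℤ) - k| < r := by
      rw [abs_lt]; constructor <;> [push_cast; push_cast] <;> omega
    have := Int.eq_zero_of_abs_lt_dvd hd habs
    omega
  -- every vertex has an edge of each residue class mod r
  have hwex : ∀ v γ, ∃ k ∈ S v, k % r = γ % r := by
    intro v γ
    have hb : m v % r ≤ m v := Nat.mod_le _ _
    have hbr : m v % r < r := Nat.mod_lt _ (by omega)
    have hgr : γ % r < r := Nat.mod_lt _ (by omega)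
    have hdm : r * (m v / r) + m v % r = m v := Nat.div_add_mod _ _
    refine ⟨m v - m v % r + (if m v % r ≤ γ % r then γ % r else γ % r + r), ?_, ?_⟩
    · rw [hIcc v, Finset.mem_Icc]
      split <;> omega
    · have hsub : m v - m v % r = r * (m v / r) := by omega
      rw [hsub, Nat.mul_add_mod]
      split
      · exact Nat.mod_eq_of_lt hgr
      · rw [Nat.add_mod_right]
        exact Nat.mod_eq_of_lt hgr
  -- the partner involution for each residue class
  have upartner : ∀ γ : ℕ, ∃ f : V → V, (∀ u, f (f u) = u ∧ f u ≠ u) ∧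
      ∀ u, ∃ e, G.Inc u e ∧ c e % r = γ % r ∧ G.ends e = s(u, f u) := by
    intro γ
    have hex : ∀ u : V, ∃ e, G.Inc u e ∧ c e % r = γ % r := by
      intro u
      obtain ⟨k, hk, hkm⟩ := hwex u γ
      obtain ⟨e, he, hce⟩ := (hSmem u k).mp hk
      exact ⟨e, he, by rw [hce]; exact hkm⟩
    have huniq : ∀ u e e', G.Inc u e → G.Inc u e' → c e % r = c e' % r → e = e' := by
      intro u e e' he he' hmod
      by_contra hne
      exact hprop e e' hne ⟨u, he, he'⟩
        (hwin u _ _ ((hSmem u _).mpr ⟨e, he, rfl⟩) ((hSmem u _).mpr ⟨e', he', rfl⟩) hmod)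
    choose ed hed1 hed2 using hex
    refine ⟨fun u => Sym2.Mem.other (hed1 u), ?_, ?_⟩
    · intro u
      have hspec : ∀ w, G.ends (ed w) = s(w, Sym2.Mem.other (hed1 w)) :=
        fun w => (Sym2.other_spec (hed1 w)).symm
      have hne : ∀ w, Sym2.Mem.other (hed1 w) ≠ w :=
        fun w => Sym2.other_ne (G.loopless _) (hed1 w)
      set w := Sym2.Mem.other (hed1 u) with hw
      have hwinc : G.Inc w (ed u) := by
        rw [Multigraph.Inc, hspec u]; exact Sym2.mem_mk_right _ _
      have hedeq : ed w = ed u := huniq w _ _ (hed1 w) hwinc (by rw [hed2, hed2])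
      have : s(w, Sym2.Mem.other (hed1 w)) = s(u, w) := by
        rw [← hspec w, hedeq, hspec u]
      rcases Sym2.eq_iff.mp this with ⟨hwu, -⟩ | ⟨-, h2⟩
      · exact absurd hwu (hne u)
      · exact ⟨h2, hne u⟩
    · intro u
      exact ⟨ed u, hed1 u, hed2 u, (Sym2.other_spec (hed1 u)).symm⟩
  -- evenness of sets closed under the partner involution
  have heven : ∀ (γ : ℕ) (P : V → Prop) (inst : DecidablePred P),
      (∀ u e w, P u → G.Inc u e → c e % r = γ % r → G.ends e = s(u, w) → w ≠ u → P w) →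
      Even (@Finset.filter V P inst Finset.univ).card := by
    intro γ P inst hcl
    obtain ⟨f, hf1, hf2⟩ := upartner γ
    apply even_card_of_invol f (fun a => (hf1 a).1) (fun a => (hf1 a).2)
    intro a ha
    rw [Finset.mem_filter] at ha ⊢
    obtain ⟨e, he, hm, hends⟩ := hf2 a
    exact ⟨Finset.mem_univ _, hcl a e (f a) ha.2 he hm hends (hf1 a).2⟩
  have hneven : Even n := by
    have := heven (c e₀) (fun _ => True) (fun _ => Decidable.isTrue trivial) (by intros; trivial)
    simpa [hn] using this
  -- key claim: every "gap" x/x+1 is crossed by at least two spectra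
  have hcross : ∀ x, 1 ≤ x → x + 1 ≤ t →
      2 ≤ (Finset.univ.filter (fun v => x ∈ S v ∧ x + 1 ∈ S v)).card := by
    intro x hx1 hx2
    by_contra hlt
    push_neg at hlt
    have hcard1 : (Finset.univ.filter (fun v => x ∈ S v ∧ x + 1 ∈ S v)).card ≤ 1 := by omega
    obtain ⟨ex, hex⟩ := hused x ⟨hx1, by omega⟩
    obtain ⟨ey, hey⟩ := hused (x + 1) ⟨by omega, hx2⟩
    have hux : x ∈ S (G.ends ex).out.1 := (hSmem _ _).mpr ⟨ex, Sym2.out_fst_mem _, hex⟩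
    have hwy : x + 1 ∈ S (G.ends ey).out.1 := (hSmem _ _).mpr ⟨ey, Sym2.out_fst_mem _, hey⟩
    set u := (G.ends ex).out.1 with hu
    set w := (G.ends ey).out.1 with hwdef
    rcases (Finset.univ.filter (fun v => x ∈ S v ∧ x + 1 ∈ S v)).eq_empty_or_nonempty with
      hCe | ⟨v, hv⟩
    · -- no crossing vertex: contradiction with connectivity
      have hnone : ∀ a, ¬(x ∈ S a ∧ x + 1 ∈ S a) := by
        intro a ha
        have : a ∈ Finset.univ.filter (fun v => x ∈ S v ∧ x + 1 ∈ S v) :=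
          Finset.mem_filter.mpr ⟨Finset.mem_univ _, ha⟩
        rw [hCe] at this
        exact absurd this (Finset.notMem_empty _)
      have hxu : m u ≤ x ∧ x ≤ m u + (r - 1) := by
        have := hux; rw [hIcc u, Finset.mem_Icc] at this; exact this
      have huL : m u + (r - 1) ≤ x := by
        by_contra hc
        exact hnone u ⟨hux, by rw [hIcc u, Finset.mem_Icc]; omega⟩
      have hxw : m w ≤ x + 1 ∧ x + 1 ≤ m w + (r - 1) := by
        have := hwy; rw [hIcc w, Finset.mem_Icc] at this; exact this
      have hwR : x + 1 ≤ m w := by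
        by_contra hc
        exact hnone w ⟨by rw [hIcc w, Finset.mem_Icc]; omega, hwy⟩
      have hreach : ∀ b, Relation.ReflTransGen G.Adj u b → m b + (r - 1) ≤ x := by
        intro b hb
        induction hb with
        | refl => exact huL
        | @tail p q hab hadj ih =>
          obtain ⟨e, he⟩ := hadj
          have hpe : G.Inc p e := by rw [Multigraph.Inc, he]; exact Sym2.mem_mk_left _ _
          have hqe : G.Inc q e := by rw [Multigraph.Inc, he]; exact Sym2.mem_mk_right _ _
          have h1 : c e ∈ S p := (hSmem _ _).mpr ⟨e, hpe, rfl⟩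
          have h2 : c e ∈ S q := (hSmem _ _).mpr ⟨e, hqe, rfl⟩
          rw [hIcc p, Finset.mem_Icc] at h1
          rw [hIcc q, Finset.mem_Icc] at h2
          by_contra hq
          exact hnone q ⟨by rw [hIcc q, Finset.mem_Icc]; omega,
            by rw [hIcc q, Finset.mem_Icc]; omega⟩
      have := hreach w (hconn.2 u w)
      omega
    · -- exactly one crossing vertex v: parity contradiction
      have hv2 : x ∈ S v ∧ x + 1 ∈ S v := (Finset.mem_filter.mp hv).2
      have huniqv : ∀ a, x ∈ S a → x + 1 ∈ S a → a = v := by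
        intro a h1 h2
        exact Finset.card_le_one.mp hcard1 a
          (Finset.mem_filter.mpr ⟨Finset.mem_univ _, h1, h2⟩) v hv
      -- left side
      have hevenL : Even (Finset.univ.filter (fun a => m a + (r - 1) ≤ x ∨ a = v)).card := by
        apply heven x _ _
        intro a e b hPa hInc hmod hends hneb
        have hca : c e ∈ S a := (hSmem _ _).mpr ⟨e, hInc, rfl⟩
        have hcb : c e ∈ S b := (hSmem _ _).mpr
          ⟨e, by rw [Multigraph.Inc, hends]; exact Sym2.mem_mk_right _ _, rfl⟩
        have hle : c e ≤ x := by
          rcases hPa with hL | rfl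
          · rw [hIcc a, Finset.mem_Icc] at hca; omega
          · have := hwin a (c e) x hca hv2.1 hmod
            omega
        rw [hIcc b, Finset.mem_Icc] at hcb
        by_cases hbL : m b + (r - 1) ≤ x
        · exact Or.inl hbL
        · right
          exact huniqv b (by rw [hIcc b, Finset.mem_Icc]; omega)
            (by rw [hIcc b, Finset.mem_Icc]; omega)
      -- right side
      have hevenR : Even (Finset.univ.filter (fun a => x + 1 ≤ m a ∨ a = v)).card := by
        apply heven (x + 1) _ _
        intro a e b hPa hInc hmod hends hneb
        have hca : c e ∈ S a := (hSmem _ _).mpr ⟨e, hInc, rfl⟩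
        have hcb : c e ∈ S b := (hSmem _ _).mpr
          ⟨e, by rw [Multigraph.Inc, hends]; exact Sym2.mem_mk_right _ _, rfl⟩
        have hge : x + 1 ≤ c e := by
          rcases hPa with hR | rfl
          · rw [hIcc a, Finset.mem_Icc] at hca; omega
          · have := hwin a (c e) (x + 1) hca hv2.2 hmod
            omega
        rw [hIcc b, Finset.mem_Icc] at hcb
        by_cases hbR : x + 1 ≤ m b
        · exact Or.inl hbR
        · right
          exact huniqv b (by rw [hIcc b, Finset.mem_Icc]; omega)
            (by rw [hIcc b, Finset.mem_Icc]; omega)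
      -- combine: |L| + |R| = n + 1, all even: contradiction
      have hvnotLR : ¬(m v + (r - 1) ≤ x ∧ x + 1 ≤ m v) := by
        omega
      have hinter : (Finset.univ.filter (fun a => m a + (r - 1) ≤ x ∨ a = v)) ∩
          (Finset.univ.filter (fun a => x + 1 ≤ m a ∨ a = v)) = {v} := by
        ext a
        simp only [Finset.mem_inter, Finset.mem_filter, Finset.mem_univ, true_and,
          Finset.mem_singleton]
        constructor
        · rintro ⟨h1 | h1, h2 | h2⟩
          · exact ((by omega : False)).elim
          · exact h2
          · exact h1
          · exact h1
        · rintro rfl; exact ⟨Or.inr rfl, Or.inr rfl⟩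
      have hunion : (Finset.univ.filter (fun a => m a + (r - 1) ≤ x ∨ a = v)) ∪
          (Finset.univ.filter (fun a => x + 1 ≤ m a ∨ a = v)) = Finset.univ := by
        ext a
        simp only [Finset.mem_union, Finset.mem_filter, Finset.mem_univ, true_and,
          iff_true]
        by_cases hav : a = v
        · exact Or.inl (Or.inr hav)
        · by_cases haL : m a + (r - 1) ≤ x
          · exact Or.inl (Or.inl haL)
          · by_cases haR : x + 1 ≤ m a
            · exact Or.inr (Or.inl haR)
            · exact absurd (huniqv a (by rw [hIcc a, Finset.mem_Icc]; omega)
                (by rw [hIcc a, Finset.mem_Icc]; omega)) hav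
      have hsum := Finset.card_union_add_card_inter
        (Finset.univ.filter (fun a => m a + (r - 1) ≤ x ∨ a = v))
        (Finset.univ.filter (fun a => x + 1 ≤ m a ∨ a = v))
      rw [hinter, hunion, Finset.card_singleton, Finset.card_univ, ← hn] at hsum
      obtain ⟨k1, hk1⟩ := hevenL
      obtain ⟨k2, hk2⟩ := hevenR
      obtain ⟨k, hk⟩ := hneven
      omega
  -- final double counting
  by_cases ht1 : t ≤ 1
  · omega
  push_neg at ht1
  have hcnt : ∀ v : V,
      ((Finset.Icc 1 (t - 1)).filter (fun x => x ∈ S v ∧ x + 1 ∈ S v)).card = r - 1 := by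
    intro v
    obtain ⟨hm1, hm2⟩ := hmbound v
    have hfe : (Finset.Icc 1 (t - 1)).filter (fun x => x ∈ S v ∧ x + 1 ∈ S v) =
        Finset.Icc (m v) (m v + (r - 1) - 1) := by
      ext y
      simp only [Finset.mem_filter, Finset.mem_Icc, hIcc v]
      omega
    rw [hfe, Nat.card_Icc]
    omega
  have hswap : ∑ x ∈ Finset.Icc 1 (t - 1),
        (Finset.univ.filter (fun v => x ∈ S v ∧ x + 1 ∈ S v)).card
      = ∑ v : V, ((Finset.Icc 1 (t - 1)).filter (fun x => x ∈ S v ∧ x + 1 ∈ S v)).card := by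
    simp only [Finset.card_filter]
    exact Finset.sum_comm
  have hlow : 2 * (t - 1) ≤ n * (r - 1) := by
    have h1 : ∑ x ∈ Finset.Icc 1 (t - 1), 2 ≤
        ∑ x ∈ Finset.Icc 1 (t - 1),
          (Finset.univ.filter (fun v => x ∈ S v ∧ x + 1 ∈ S v)).card :=
      Finset.sum_le_sum (fun x hx => by
        rw [Finset.mem_Icc] at hx
        exact hcross x hx.1 (by omega))
    rw [hswap] at h1
    simp only [hcnt, Finset.sum_const, Finset.card_univ, smul_eq_mul, Nat.card_Icc] at h1
    rw [← hn] at h1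
    omega
  obtain ⟨k, hk⟩ := hneven
  have hk2 : n / 2 = k := by omega
  rw [hk2]
  have hfin : (k + k) * (r - 1) = 2 * (k * (r - 1)) := by ring
  rw [hk, hfin] at hlow
  omega
end

section
/- If G is a graph with at least two vertices admitting an interval t-coloring, then t ≤ 2|V(G)| − 3. -/
namespace IC

open scoped Classical

variable {V : Type*}

/-- The colors at `v`, as a finset. -/
noncomputable def cs (G : SimpleGraph V) (c : Sym2 V → ℕ) (t : ℕ) (v : V) : Finset ℕ :=
  (Finset.Icc 1 t).filter fun i => i ∈ colorsAt G c v

section Basic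

variable {G : SimpleGraph V} {c : Sym2 V → ℕ} {t : ℕ}

lemma of_mem_cs {v : V} {i : ℕ} (hi : i ∈ cs G c t v) : i ∈ colorsAt G c v :=
  (Finset.mem_filter.mp hi).2

lemma mem_cs_icc {v : V} {i : ℕ} (hi : i ∈ cs G c t v) : 1 ≤ i ∧ i ≤ t :=
  Finset.mem_Icc.mp (Finset.mem_filter.mp hi).1

lemma mem_cs_of (h : IsIntervalColoring G t c) {v : V} {i : ℕ}
    (hi : i ∈ colorsAt G c v) : i ∈ cs G c t v := by
  refine Finset.mem_filter.mpr ⟨?_, hi⟩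
  obtain ⟨e, he, hve, hce⟩ := hi
  have h2 := h.2.1 e he
  rw [hce, Set.mem_Icc] at h2
  exact Finset.mem_Icc.mpr h2

lemma cs_ival (h : IsIntervalColoring G t c) {v : V} {i j k : ℕ} (hi : i ∈ cs G c t v)
    (hj : j ∈ cs G c t v) (hik : i ≤ k) (hkj : k ≤ j) : k ∈ cs G c t v :=
  mem_cs_of h (h.2.2.2 v i j k (of_mem_cs hi) (of_mem_cs hj) hik hkj)

lemma exists_nbr (h : IsIntervalColoring G t c) {v : V} {i : ℕ} (hi : i ∈ cs G c t v) :
    ∃ u, G.Adj v u ∧ c s(v, u) = i ∧ i ∈ cs G c t u := by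
  obtain ⟨e, he, hve, hce⟩ := of_mem_cs hi
  induction e using Sym2.ind with
  | _ x y =>
    have hadj : G.Adj x y := (SimpleGraph.mem_edgeSet G).mp he
    rw [Sym2.mem_iff] at hve
    rcases hve with rfl | rfl
    · exact ⟨y, hadj, hce, mem_cs_of h ⟨s(v, y), he, Sym2.mem_mk_right v y, hce⟩⟩
    · refine ⟨x, hadj.symm, ?_, mem_cs_of h ⟨s(x, v), he, Sym2.mem_mk_left x v, hce⟩⟩
      rw [Sym2.eq_swap]; exact hce

end Basic

/-- Minimum color at `v` (0 if none). -/
noncomputable def mnn (G : SimpleGraph V) (c : Sym2 V → ℕ) (t : ℕ) (v : V) : ℕ :=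
  if h : (cs G c t v).Nonempty then (cs G c t v).min' h else 0

section Mnn
variable {G : SimpleGraph V} {c : Sym2 V → ℕ} {t : ℕ}

lemma mnn_le {v : V} {i : ℕ} (hi : i ∈ cs G c t v) : mnn G c t v ≤ i := by
  rw [mnn, dif_pos ⟨i, hi⟩]; exact Finset.min'_le _ _ hi

lemma mnn_mem {v : V} (hv : (cs G c t v).Nonempty) : mnn G c t v ∈ cs G c t v := by
  rw [mnn, dif_pos hv]; exact Finset.min'_mem _ _

end Mnn

/-- Candidates for continuing the chain below color `a`. -/
noncomputable def cand [Fintype V] (G : SimpleGraph V) (c : Sym2 V → ℕ) (t a : ℕ) :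
    Finset V :=
  Finset.univ.filter fun u => a ∈ cs G c t u ∧ a - 1 ∈ cs G c t u

lemma mem_cand [Fintype V] {G : SimpleGraph V} {c : Sym2 V → ℕ} {t a : ℕ} {u : V} :
    u ∈ cand G c t a ↔ a ∈ cs G c t u ∧ a - 1 ∈ cs G c t u := by
  rw [cand, Finset.mem_filter]
  simp

/-- The chain is stopped at `v`. -/
def Stopped [Fintype V] (G : SimpleGraph V) (c : Sym2 V → ℕ) (t : ℕ) (v : V) : Prop :=
  ¬(1 < mnn G c t v ∧ (cand G c t (mnn G c t v)).Nonempty)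

/-- Greedy next vertex in the chain. -/
noncomputable def nxt [Fintype V] (G : SimpleGraph V) (c : Sym2 V → ℕ) (t : ℕ) (v : V) : V :=
  if h : 1 < mnn G c t v ∧ (cand G c t (mnn G c t v)).Nonempty then
    (Finset.exists_min_image (cand G c t (mnn G c t v)) (mnn G c t) h.2).choose
  else v

/-- The greedy descending chain from `w`. -/
noncomputable def chain [Fintype V] (G : SimpleGraph V) (c : Sym2 V → ℕ) (t : ℕ) (w : V) :
    ℕ → V
  | 0 => w
  | s + 1 => nxt G c t (chain G c t w s)

section Chain
variable [Fintype V] {G : SimpleGraph V} {c : Sym2 V → ℕ} {t : ℕ} {w : V}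

lemma chain_zero : chain G c t w 0 = w := rfl

lemma chain_succ (s : ℕ) : chain G c t w (s + 1) = nxt G c t (chain G c t w s) := rfl

lemma nxt_spec {v : V} (hv : ¬ Stopped G c t v) :
    mnn G c t v ∈ cs G c t (nxt G c t v) ∧ mnn G c t v - 1 ∈ cs G c t (nxt G c t v) ∧
      ∀ u ∈ cand G c t (mnn G c t v), mnn G c t (nxt G c t v) ≤ mnn G c t u := by
  rw [Stopped, not_not] at hv
  rw [nxt, dif_pos hv]
  have hspec := (Finset.exists_min_image (cand G c t (mnn G c t v)) (mnn G c t) hv.2).choose_spec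
  have hmem := mem_cand.mp hspec.1
  exact ⟨hmem.1, hmem.2, hspec.2⟩

lemma nxt_stopped {v : V} (hv : Stopped G c t v) : nxt G c t v = v := by
  rw [Stopped] at hv
  rw [nxt, dif_neg hv]

lemma mnn_lt_of_not_stopped {v : V} (hv : ¬ Stopped G c t v) :
    mnn G c t (nxt G c t v) < mnn G c t v := by
  have h1 : 1 < mnn G c t v := (not_not.mp hv).1
  have h2 := mnn_le (nxt_spec hv).2.1
  omega

lemma cs_chain_nonempty (hw : (cs G c t w).Nonempty) (s : ℕ) :
    (cs G c t (chain G c t w s)).Nonempty := by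
  induction s with
  | zero => exact hw
  | succ s ih =>
    by_cases hs : Stopped G c t (chain G c t w s)
    · rw [chain_succ, nxt_stopped hs]; exact ih
    · exact ⟨mnn G c t (chain G c t w s), (nxt_spec hs).1⟩

lemma mnn_chain_succ_le (s : ℕ) :
    mnn G c t (chain G c t w (s + 1)) ≤ mnn G c t (chain G c t w s) := by
  by_cases hs : Stopped G c t (chain G c t w s)
  · rw [chain_succ, nxt_stopped hs]
  · exact le_of_lt (mnn_lt_of_not_stopped hs)

lemma mnn_chain_mono {s s' : ℕ} (hss : s ≤ s') :
    mnn G c t (chain G c t w s') ≤ mnn G c t (chain G c t w s) := by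
  induction s' with
  | zero => simp_all
  | succ n ih =>
    rcases Nat.lt_or_ge s (n + 1) with hlt | hge
    · exact le_trans (mnn_chain_succ_le n) (ih (by omega))
    · have : s = n + 1 := by omega
      rw [this]

lemma chain_stable {s : ℕ} (hs : Stopped G c t (chain G c t w s)) (d : ℕ) :
    chain G c t w (s + d) = chain G c t w s := by
  induction d with
  | zero => rfl
  | succ d ih =>
    have : s + (d + 1) = (s + d) + 1 := by omega
    rw [this, chain_succ, ih, nxt_stopped hs]

lemma exists_stopped (hw : (cs G c t w).Nonempty) :
    ∃ s, Stopped G c t (chain G c t w s) := by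
  by_contra hns
  push_neg at hns
  have key : ∀ s, mnn G c t (chain G c t w s) + s ≤ mnn G c t (chain G c t w 0) := by
    intro s
    induction s with
    | zero => omega
    | succ n ih =>
      have := mnn_lt_of_not_stopped (hns n)
      rw [← chain_succ] at this
      omega
  have h1 := key (mnn G c t (chain G c t w 0) + 1)
  have h2 := mem_cs_icc (mnn_mem (cs_chain_nonempty hw (mnn G c t (chain G c t w 0) + 1)))
  omega

end Chain

/-- The step at which color `i` first enters the chain's reach. -/
noncomputable def stp [Fintype V] (G : SimpleGraph V) (c : Sym2 V → ℕ) (t : ℕ) (w : V)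
    (i : ℕ) : ℕ :=
  if h : ∃ s, mnn G c t (chain G c t w s) ≤ i then Nat.find h else 0

/-- A chosen neighbor giving color `i` at the chain vertex of its step. -/
noncomputable def nbr [Fintype V] (G : SimpleGraph V) (c : Sym2 V → ℕ) (t : ℕ) (w : V)
    (i : ℕ) : V :=
  if h : ∃ u, G.Adj (chain G c t w (stp G c t w i)) u ∧
      c s(chain G c t w (stp G c t w i), u) = i ∧ i ∈ cs G c t u then
    h.choose
  else w

section Stp
variable [Fintype V] {G : SimpleGraph V} {c : Sym2 V → ℕ} {t : ℕ} {w : V}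

lemma stp_spec {i : ℕ} (hex : ∃ s, mnn G c t (chain G c t w s) ≤ i) :
    mnn G c t (chain G c t w (stp G c t w i)) ≤ i := by
  rw [stp, dif_pos hex]; exact Nat.find_spec hex

lemma stp_le {i s : ℕ} (hs : mnn G c t (chain G c t w s) ≤ i) : stp G c t w i ≤ s := by
  rw [stp, dif_pos ⟨s, hs⟩]; exact Nat.find_le hs

lemma stp_min {i s : ℕ} (hex : ∃ s, mnn G c t (chain G c t w s) ≤ i)
    (hs : s < stp G c t w i) : ¬ mnn G c t (chain G c t w s) ≤ i := by
  rw [stp, dif_pos hex] at hs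
  exact Nat.find_min hex hs

end Stp

/-- The set of vertices whose colors all lie in `[a, b]`. -/
noncomputable def Ublk [Fintype V] (G : SimpleGraph V) (c : Sym2 V → ℕ) (t a b : ℕ) :
    Finset V :=
  Finset.univ.filter fun v => (cs G c t v).Nonempty ∧ cs G c t v ⊆ Finset.Icc a b

lemma mem_Ublk [Fintype V] {G : SimpleGraph V} {c : Sym2 V → ℕ} {t a b : ℕ} {v : V} :
    v ∈ Ublk G c t a b ↔ (cs G c t v).Nonempty ∧ cs G c t v ⊆ Finset.Icc a b := by
  rw [Ublk, Finset.mem_filter]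
  simp


section Block
variable [Fintype V] {G : SimpleGraph V} {c : Sym2 V → ℕ} {t : ℕ}

lemma block (h : IsIntervalColoring G t c) {b : ℕ} (hb1 : 1 ≤ b) (hbt : b ≤ t)
    (hg : b = t ∨ ¬∃ v, b ∈ cs G c t v ∧ b + 1 ∈ cs G c t v) :
    ∃ a, 1 ≤ a ∧ a ≤ b ∧
      (a = 1 ∨ ¬∃ v, a - 1 ∈ cs G c t v ∧ a ∈ cs G c t v) ∧
      b + 1 - a + 3 ≤ 2 * (Ublk G c t a b).card := by
  classical
  -- start vertex w
  obtain ⟨w, hwb⟩ : ∃ w, b ∈ cs G c t w := by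
    obtain ⟨e, he, hce⟩ := h.2.2.1 b (Set.mem_Icc.mpr ⟨hb1, hbt⟩)
    induction e using Sym2.ind with
    | _ x y => exact ⟨x, mem_cs_of h ⟨s(x, y), he, Sym2.mem_mk_left x y, hce⟩⟩
  have hwne : (cs G c t w).Nonempty := ⟨b, hwb⟩
  -- all colors of a vertex having a color ≤ b are ≤ b
  have hub : ∀ v i, i ∈ cs G c t v → i ≤ b → ∀ j ∈ cs G c t v, j ≤ b := by
    intro v i hi hib j hj
    by_contra hjb
    push_neg at hjb
    have hbv : b ∈ cs G c t v := cs_ival h hi hj hib (le_of_lt hjb)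
    have hb1v : b + 1 ∈ cs G c t v := cs_ival h hi hj (by omega) (by omega)
    rcases hg with rfl | hng
    · have := (mem_cs_icc hb1v).2; omega
    · exact hng ⟨v, hbv, hb1v⟩
  -- the stopping time
  have hstopex : ∃ s, Stopped G c t (chain G c t w s) := exists_stopped hwne
  set K := Nat.find hstopex with hKdef
  have hKstop : Stopped G c t (chain G c t w K) := Nat.find_spec hstopex
  set a := mnn G c t (chain G c t w K) with hadef
  have haK : a ∈ cs G c t (chain G c t w K) := mnn_mem (cs_chain_nonempty hwne K)
  have ha1 : 1 ≤ a := (mem_cs_icc haK).1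
  have hmnn0 : mnn G c t (chain G c t w 0) ≤ b := mnn_le hwb
  have hab : a ≤ b := le_trans (mnn_chain_mono (Nat.zero_le K)) hmnn0
  have hstable : ∀ s, K ≤ s → chain G c t w s = chain G c t w K := by
    intro s hs
    have h2 := chain_stable hKstop (s - K)
    rwa [Nat.add_sub_cancel' hs] at h2
  have halow : ∀ s, a ≤ mnn G c t (chain G c t w s) := by
    intro s
    rcases le_or_gt s K with hsK | hKs
    · exact mnn_chain_mono hsK
    · rw [hstable s (le_of_lt hKs)]
  have hex : ∀ i, a ≤ i → ∃ s, mnn G c t (chain G c t w s) ≤ i := by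
    intro i hi; exact ⟨K, by rw [← hadef]; exact hi⟩
  have hstpK : ∀ i, a ≤ i → stp G c t w i ≤ K := by
    intro i hi; exact stp_le (by rw [← hadef]; exact hi)
  -- no stop strictly before step (stp i)
  have hnostop : ∀ i s, a ≤ i → ¬ mnn G c t (chain G c t w s) ≤ i →
      ¬ Stopped G c t (chain G c t w s) := by
    intro i s hai hnle hstop
    have hKle : K ≤ s := Nat.find_le hstop
    rw [hstable s hKle, ← hadef] at hnle
    exact hnle hai
  -- membership of i at its step
  have hmemstep : ∀ i, a ≤ i → i ≤ b → i ∈ cs G c t (chain G c t w (stp G c t w i)) := by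
    intro i hai hib
    rcases Nat.eq_zero_or_pos (stp G c t w i) with h0 | hpos
    · have h1 : mnn G c t (chain G c t w (stp G c t w i)) ≤ i := stp_spec (hex i hai)
      rw [h0] at h1 ⊢
      exact cs_ival h (mnn_mem hwne) hwb h1 hib
    · obtain ⟨s, hseq⟩ := Nat.exists_eq_succ_of_ne_zero (by omega : stp G c t w i ≠ 0)
      have hnle : ¬ mnn G c t (chain G c t w s) ≤ i := stp_min (hex i hai) (by omega)
      have hnstop : ¬ Stopped G c t (chain G c t w s) := hnostop i s hai hnle
      obtain ⟨hm1, hm2, hgr⟩ := nxt_spec hnstop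
      rw [← chain_succ] at hm1
      have hlow : mnn G c t (chain G c t w (s + 1)) ≤ i := by
        have h9 := stp_spec (hex i hai)
        rw [hseq] at h9
        exact h9
      rw [hseq]
      exact cs_ival h (mnn_mem (cs_chain_nonempty hwne (s + 1))) hm1 hlow (by omega)
  -- neighbor spec
  have hnbr : ∀ i, a ≤ i → i ≤ b →
      G.Adj (chain G c t w (stp G c t w i)) (nbr G c t w i) ∧
      c s(chain G c t w (stp G c t w i), nbr G c t w i) = i ∧
      i ∈ cs G c t (nbr G c t w i) := by
    intro i hai hib
    have hex2 := exists_nbr h (hmemstep i hai hib)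
    rw [nbr, dif_pos hex2]
    exact hex2.choose_spec
  -- the key fiber lemma
  have hkey : ∀ i j, a ≤ i → i ≤ b → a ≤ j → j ≤ b → i < j →
      nbr G c t w i = nbr G c t w j → stp G c t w i = stp G c t w j + 1 := by
    intro i j hai hib haj hjb hij hnn
    obtain ⟨hadji, hci, hcsi⟩ := hnbr i hai hib
    obtain ⟨hadjj, hcj, hcsj⟩ := hnbr j haj hjb
    have hji : stp G c t w j ≤ stp G c t w i :=
      stp_le (le_trans (stp_spec (hex i hai)) (le_of_lt hij))
    rcases eq_or_lt_of_le hji with heq | hlt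
    · exfalso
      rw [heq, ← hnn] at hcj
      rw [hcj] at hci
      omega
    · have hnlei : ¬ mnn G c t (chain G c t w (stp G c t w j)) ≤ i :=
        stp_min (hex i hai) hlt
      have hlej : mnn G c t (chain G c t w (stp G c t w j)) ≤ j := stp_spec (hex j haj)
      rw [← hnn] at hcsj
      have hu1 : mnn G c t (chain G c t w (stp G c t w j)) ∈ cs G c t (nbr G c t w i) :=
        cs_ival h hcsi hcsj (by omega) hlej
      have hu2 : mnn G c t (chain G c t w (stp G c t w j)) - 1 ∈ cs G c t (nbr G c t w i) :=
        cs_ival h hcsi hcsj (by omega) (by omega)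
      have hnstop : ¬ Stopped G c t (chain G c t w (stp G c t w j)) :=
        hnostop i (stp G c t w j) hai hnlei
      obtain ⟨_, _, hgreedy⟩ := nxt_spec hnstop
      have hucand : nbr G c t w i ∈ cand G c t (mnn G c t (chain G c t w (stp G c t w j))) :=
        mem_cand.mpr ⟨hu1, hu2⟩
      have h5 := hgreedy _ hucand
      rw [← chain_succ] at h5
      have h6 : mnn G c t (chain G c t w (stp G c t w j + 1)) ≤ i :=
        le_trans h5 (mnn_le hcsi)
      have h7 : stp G c t w i ≤ stp G c t w j + 1 := stp_le h6
      omega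
  -- fibers have at most two elements
  have hfib2 : ∀ v : V,
      ((Finset.Icc a b).filter fun i => nbr G c t w i = v).card ≤ 2 := by
    intro v
    set F := (Finset.Icc a b).filter fun i => nbr G c t w i = v with hF
    rcases F.eq_empty_or_nonempty with hFe | hFne
    · rw [hFe]; simp
    · have hmax := F.max'_mem hFne
      have hkey' : ∀ x ∈ F, x ≠ F.max' hFne → stp G c t w x = stp G c t w (F.max' hFne) + 1 := by
        intro x hx hxne
        have hx' := Finset.mem_filter.mp hx
        have hm' := Finset.mem_filter.mp hmax
        have hxI := Finset.mem_Icc.mp hx'.1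
        have hmI := Finset.mem_Icc.mp hm'.1
        have hxlt : x < F.max' hFne := lt_of_le_of_ne (F.le_max' x hx) hxne
        exact hkey x (F.max' hFne) hxI.1 hxI.2 hmI.1 hmI.2 hxlt (by rw [hx'.2, hm'.2])
      have hcard1 : (F.erase (F.max' hFne)).card ≤ 1 := by
        rw [Finset.card_le_one]
        intro x hx y hy
        have hx' := Finset.mem_erase.mp hx
        have hy' := Finset.mem_erase.mp hy
        have e1 := hkey' x hx'.2 hx'.1
        have e2 := hkey' y hy'.2 hy'.1
        rcases lt_trichotomy x y with hl | he | hl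
        · exfalso
          have hxI := Finset.mem_Icc.mp (Finset.mem_filter.mp hx'.2).1
          have hyI := Finset.mem_Icc.mp (Finset.mem_filter.mp hy'.2).1
          have := hkey x y hxI.1 hxI.2 hyI.1 hyI.2 hl
            (by rw [(Finset.mem_filter.mp hx'.2).2, (Finset.mem_filter.mp hy'.2).2])
          omega
        · exact he
        · exfalso
          have hxI := Finset.mem_Icc.mp (Finset.mem_filter.mp hx'.2).1
          have hyI := Finset.mem_Icc.mp (Finset.mem_filter.mp hy'.2).1
          have := hkey y x hyI.1 hyI.2 hxI.1 hxI.2 hl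
            (by rw [(Finset.mem_filter.mp hx'.2).2, (Finset.mem_filter.mp hy'.2).2])
          omega
      have := Finset.card_erase_add_one hmax
      omega
  -- nbr never hits the chain start
  have hnbr_ne0 : ∀ i, a ≤ i → i ≤ b → nbr G c t w i ≠ chain G c t w 0 := by
    intro i hai hib heq
    obtain ⟨hadji, hci, hcsi⟩ := hnbr i hai hib
    rw [heq] at hcsi
    have hstp0 : stp G c t w i = 0 := Nat.le_zero.mp (stp_le (mnn_le hcsi))
    rw [hstp0, heq] at hadji
    exact G.irrefl hadji
  -- the fiber of (chain 1) is small
  have hfib_c1 : ((Finset.Icc a b).filter fun i => nbr G c t w i = chain G c t w 1).card ≤ 1 := by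
    rw [Finset.card_le_one]
    intro x hx y hy
    have hx' := Finset.mem_filter.mp hx
    have hy' := Finset.mem_filter.mp hy
    have hxI := Finset.mem_Icc.mp hx'.1
    have hyI := Finset.mem_Icc.mp hy'.1
    have hstpx : stp G c t w x = 0 := by
      obtain ⟨hadjx, hcx, hcsx⟩ := hnbr x hxI.1 hxI.2
      rw [hx'.2] at hcsx
      have h1 : stp G c t w x ≤ 1 := stp_le (mnn_le hcsx)
      rcases Nat.eq_zero_or_pos (stp G c t w x) with h0 | hpos
      · exact h0
      · exfalso
        have : stp G c t w x = 1 := by omega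
        rw [this, hx'.2] at hadjx
        exact G.irrefl hadjx
    have hstpy : stp G c t w y = 0 := by
      obtain ⟨hadjy, hcy, hcsy⟩ := hnbr y hyI.1 hyI.2
      rw [hy'.2] at hcsy
      have h1 : stp G c t w y ≤ 1 := stp_le (mnn_le hcsy)
      rcases Nat.eq_zero_or_pos (stp G c t w y) with h0 | hpos
      · exact h0
      · exfalso
        have : stp G c t w y = 1 := by omega
        rw [this, hy'.2] at hadjy
        exact G.irrefl hadjy
    obtain ⟨hadjx, hcx, hcsx⟩ := hnbr x hxI.1 hxI.2
    obtain ⟨hadjy, hcy, hcsy⟩ := hnbr y hyI.1 hyI.2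
    rw [hstpx, hx'.2] at hcx
    rw [hstpy, hy'.2] at hcy
    rw [hcx] at hcy
    omega
  -- membership in the block vertex set
  have hUmem : ∀ v i, a ≤ i → i ≤ b → i ∈ cs G c t v → v ∈ Ublk G c t a b := by
    intro v i hai hib hiv
    refine mem_Ublk.mpr ⟨⟨i, hiv⟩, ?_⟩
    intro j hj
    rw [Finset.mem_Icc]
    have hj1 : 1 ≤ j := (mem_cs_icc hj).1
    constructor
    · by_contra hja
      push_neg at hja
      have h1 : a - 1 ∈ cs G c t v := cs_ival h hj hiv (by omega) (by omega)
      have h2 : a ∈ cs G c t v := cs_ival h hj hiv (by omega) hai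
      refine hKstop ⟨?_, ⟨v, mem_cand.mpr ⟨?_, ?_⟩⟩⟩
      · rw [← hadef]; omega
      · rw [← hadef]; exact h2
      · rw [← hadef]; exact h1
    · exact hub v i hiv hib j hj
  -- assembly
  refine ⟨a, ha1, hab, ?_, ?_⟩
  · rcases Nat.lt_or_ge 1 a with hlt | hge
    · right
      rintro ⟨v, hv1, hv2⟩
      refine hKstop ⟨?_, ⟨v, mem_cand.mpr ⟨?_, ?_⟩⟩⟩
      · rw [← hadef]; exact hlt
      · rw [← hadef]; exact hv2
      · rw [← hadef]; exact hv1
    · left; omega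
  · have hSrw : (Finset.Icc a b).card = b + 1 - a := Nat.card_Icc a b
    have hmapsB : ∀ i ∈ Finset.Icc a b,
        nbr G c t w i ∈ (Ublk G c t a b).erase (chain G c t w 0) := by
      intro i hi
      rw [Finset.mem_Icc] at hi
      exact Finset.mem_erase.mpr
        ⟨hnbr_ne0 i hi.1 hi.2, hUmem _ i hi.1 hi.2 (hnbr i hi.1 hi.2).2.2⟩
    have hw0U : chain G c t w 0 ∈ Ublk G c t a b := hUmem _ b hab le_rfl hwb
    have hBcard : ((Ublk G c t a b).erase (chain G c t w 0)).card + 1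
        = (Ublk G c t a b).card := Finset.card_erase_add_one hw0U
    by_cases hstop0 : Stopped G c t (chain G c t w 0)
    · -- short chain: injectivity
      have hK0 : K = 0 := Nat.le_zero.mp (Nat.find_le hstop0)
      have hinj : Set.InjOn (nbr G c t w) ↑(Finset.Icc a b) := by
        intro x hx y hy hxy
        rw [Finset.mem_coe, Finset.mem_Icc] at hx hy
        rcases lt_trichotomy x y with hl | he | hl
        · exfalso
          have := hkey x y hx.1 hx.2 hy.1 hy.2 hl hxy
          have h1 := hstpK x hx.1
          omega
        · exact he
        · exfalso
          have := hkey y x hy.1 hy.2 hx.1 hx.2 hl hxy.symm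
          have h1 := hstpK y hy.1
          omega
      have hcard := Finset.card_le_card_of_injOn _ hmapsB hinj
      have hbB : nbr G c t w b ∈ (Ublk G c t a b).erase (chain G c t w 0) :=
        hmapsB b (Finset.mem_Icc.mpr ⟨hab, le_rfl⟩)
      have hBpos : 1 ≤ ((Ublk G c t a b).erase (chain G c t w 0)).card :=
        Finset.card_pos.mpr ⟨_, hbB⟩
      omega
    · -- long chain: fiberwise count
      obtain ⟨hm1, hm2, _⟩ := nxt_spec hstop0
      rw [← chain_succ] at hm1
      have hc1U : chain G c t w 1 ∈ Ublk G c t a b :=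
        hUmem _ (mnn G c t (chain G c t w 0)) (halow 0) hmnn0 hm1
      have hc1ne0 : chain G c t w 1 ≠ chain G c t w 0 := by
        intro heq
        have h1 : mnn G c t (chain G c t w 1) < mnn G c t (chain G c t w 0) := by
          rw [chain_succ]
          exact mnn_lt_of_not_stopped hstop0
        rw [heq] at h1
        omega
      have hc1B : chain G c t w 1 ∈ (Ublk G c t a b).erase (chain G c t w 0) :=
        Finset.mem_erase.mpr ⟨hc1ne0, hc1U⟩
      have hcardsum := Finset.card_eq_sum_card_fiberwise hmapsB
      set B := (Ublk G c t a b).erase (chain G c t w 0) with hB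
      have hsum1 : ∑ v ∈ B.erase (chain G c t w 1),
            ((Finset.Icc a b).filter fun i => nbr G c t w i = v).card
          ≤ (B.erase (chain G c t w 1)).card * 2 := by
        have := Finset.sum_le_card_nsmul (B.erase (chain G c t w 1))
          (fun v => ((Finset.Icc a b).filter fun i => nbr G c t w i = v).card) 2
          (fun v _ => hfib2 v)
        simpa using this
      have hsplit := Finset.sum_erase_add B
        (fun v => ((Finset.Icc a b).filter fun i => nbr G c t w i = v).card) hc1B
      have hBecard : (B.erase (chain G c t w 1)).card + 1 = B.card :=
        Finset.card_erase_add_one hc1B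
      have htotal : (Finset.Icc a b).card ≤ (B.erase (chain G c t w 1)).card * 2 + 1 := by
        rw [hcardsum, ← hsplit]
        exact add_le_add hsum1 hfib_c1
      omega

end Block


section MainInd
variable [Fintype V] {G : SimpleGraph V} {c : Sym2 V → ℕ} {t : ℕ}

lemma mainInd (h : IsIntervalColoring G t c) :
    ∀ b, b ≤ t → (b = t ∨ ¬∃ v, b ∈ cs G c t v ∧ b + 1 ∈ cs G c t v) →
      b = 0 ∨ b + 3 ≤ 2 * (Ublk G c t 1 b).card := by
  intro b
  induction b using Nat.strong_induction_on with
  | _ b ih =>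
    intro hbt hg
    rcases Nat.eq_zero_or_pos b with rfl | hb1
    · left; rfl
    right
    obtain ⟨a, ha1, hab, hguard, hcount⟩ := block h hb1 hbt hg
    rcases Nat.eq_or_lt_of_le ha1 with ha1' | ha2
    · rw [← ha1'] at hcount
      omega
    · have hguard' : ¬∃ v, a - 1 ∈ cs G c t v ∧ a - 1 + 1 ∈ cs G c t v := by
        rcases hguard with h1 | h2
        · omega
        · have : a - 1 + 1 = a := by omega
          rw [this]
          exact h2
      have hIH := ih (a - 1) (by omega) (by omega) (Or.inr hguard')
      rcases hIH with h0 | hle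
      · omega
      · have hsub : Ublk G c t 1 (a - 1) ∪ Ublk G c t a b ⊆ Ublk G c t 1 b := by
          intro v hv
          rcases Finset.mem_union.mp hv with h1 | h1 <;>
            obtain ⟨hne, hss⟩ := mem_Ublk.mp h1 <;>
            refine mem_Ublk.mpr ⟨hne, fun j hj => ?_⟩ <;>
            have := Finset.mem_Icc.mp (hss hj) <;>
            rw [Finset.mem_Icc] <;>
            omega
        have hdisj : Disjoint (Ublk G c t 1 (a - 1)) (Ublk G c t a b) := by
          rw [Finset.disjoint_left]
          intro v h1 h2
          obtain ⟨⟨j, hj⟩, hss1⟩ := mem_Ublk.mp h1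
          have hj1 := Finset.mem_Icc.mp (hss1 hj)
          have hj2 := Finset.mem_Icc.mp ((mem_Ublk.mp h2).2 hj)
          omega
        have hcards : (Ublk G c t 1 (a - 1)).card + (Ublk G c t a b).card
            ≤ (Ublk G c t 1 b).card := by
          rw [← Finset.card_union_of_disjoint hdisj]
          exact Finset.card_le_card hsub
        omega

end MainInd

end IC

/-- If `G` has at least two vertices and admits an interval `t`-coloring, then
`t ≤ 2|V(G)| − 3`. -/
theorem stmt11 {V : Type*} [Fintype V] (G : SimpleGraph V)
    (hcard : 2 ≤ Fintype.card V)
    (t : ℕ) (c : Sym2 V → ℕ) (h : IsIntervalColoring G t c) :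
    t ≤ 2 * Fintype.card V - 3 := by
  classical
  rcases Nat.eq_zero_or_pos t with rfl | hpos
  · exact Nat.zero_le _
  · have hm := IC.mainInd h t le_rfl (Or.inl rfl)
    rcases hm with h0 | hle
    · omega
    · have hU : (IC.Ublk G c t 1 t).card ≤ Fintype.card V := by
        calc (IC.Ublk G c t 1 t).card ≤ (Finset.univ : Finset V).card :=
              Finset.card_le_card (Finset.filter_subset _ _)
          _ = Fintype.card V := Finset.card_univ
      omega
end
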